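/- arXiv:1201.2803 — 3 statements merged into one kernel-verified Lean document; each statement's English description precedes it below -/
import Mathlib

section
/- Let C = {C_1,…,C_K} be a clustering of {1,…,n} and let A(t), t ≥ 0, be a sequence of n×n stochastic matrices satisfying: (B1) there exists e > 0 such that for all i, j, t, either A_{ij}(t) = 0 or A_{ij}(t) ≥ e; (B2) A_{ii}(t) ≥ e for all i and t; (B3) each A(t) has inter-cluster common influence w.r.t. C. Suppose there exists an integer L > 0 such that for every t ≥ 0 the matrix Σ_{s=t}^{t+L−1} A(s) has cluster-spanning-trees w.r.t. C. Then the cluster Hajnal diameters of the left products decay exponentially: there exist M ≥ 0 and q ∈ (0,1) such that Δ_C(A(t−1) A(t−2) ··· A(0)) ≤ M q^t for all t ≥ 1. -/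
open Finset Filter Topology Matrix

/-- An `n × n` real matrix is stochastic if all entries are nonnegative and
every row sums to `1`. -/
def IsStochastic {n : ℕ} (A : Matrix (Fin n) (Fin n) ℝ) : Prop :=
  (∀ i j, 0 ≤ A i j) ∧ ∀ i, ∑ j, A i j = 1

/-- A clustering of `{1,…,n}`: pairwise disjoint subsets whose union is everything. -/
def IsClustering {n K : ℕ} (C : Fin K → Finset (Fin n)) : Prop :=
  (∀ p q, p ≠ q → Disjoint (C p) (C q)) ∧ ∀ i, ∃ p, i ∈ C p

/-- Reachability along directed edges of `G(A)`: edge from `j` to `i` iff `A i j > 0`. -/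
def Reaches {n : ℕ} (A : Matrix (Fin n) (Fin n) ℝ) : Fin n → Fin n → Prop :=
  Relation.ReflTransGen fun j i => 0 < A i j

/-- `A` has cluster-spanning-trees w.r.t. `C`: for each cluster there is a vertex from
which every vertex of the cluster is reachable in `G(A)`. -/
def HasClusterSpanningTrees {n K : ℕ} (C : Fin K → Finset (Fin n))
    (A : Matrix (Fin n) (Fin n) ℝ) : Prop :=
  ∀ p, ∃ v, ∀ i ∈ C p, Reaches A v i

/-- Inter-cluster common influence: `∑_{j ∈ C q} A i j` is the same for all `i ∈ C p`. -/
def InterClusterCommonInfluence {n K : ℕ} (C : Fin K → Finset (Fin n))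
    (A : Matrix (Fin n) (Fin n) ℝ) : Prop :=
  ∀ p q, ∀ i ∈ C p, ∀ i' ∈ C p, ∑ j ∈ C q, A i j = ∑ j ∈ C q, A i' j

/-- Cluster ergodicity coefficient
`μ_C(A) = min_p min_{i,j ∈ C p} ∑_k min (A i k) (A j k)`. -/
noncomputable def muC {n K : ℕ} (C : Fin K → Finset (Fin n))
    (A : Matrix (Fin n) (Fin n) ℝ) : ℝ :=
  sInf {s | ∃ p, ∃ i ∈ C p, ∃ j ∈ C p, s = ∑ k, min (A i k) (A j k)}

/-- Cluster Hajnal diameter `Δ_C(A) = max_p max_{i,j ∈ C p} max_k |A i k - A j k|`. -/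
noncomputable def DeltaC {n K : ℕ} (C : Fin K → Finset (Fin n))
    (A : Matrix (Fin n) (Fin n) ℝ) : ℝ :=
  sSup {d | ∃ p, ∃ i ∈ C p, ∃ j ∈ C p, ∃ k, d = |A i k - A j k|}

/-- The cluster-consensus subspace `S_C`. -/
def SC {n K : ℕ} (C : Fin K → Finset (Fin n)) : Set (Fin n → ℝ) :=
  {x | ∀ p, ∀ i ∈ C p, ∀ j ∈ C p, x i = x j}

/-- Left product `prodFrom A a m = A (a+m-1) * ⋯ * A (a+1) * A a` (with `m` factors). -/
def prodFrom {n : ℕ} (A : ℕ → Matrix (Fin n) (Fin n) ℝ) (a : ℕ) :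
    ℕ → Matrix (Fin n) (Fin n) ℝ
  | 0 => 1
  | m + 1 => A (a + m) * prodFrom A a m


namespace Stmt14Aux
variable {n K : ℕ} {C : Fin K → Finset (Fin n)}

lemma stoch_one : IsStochastic (1 : Matrix (Fin n) (Fin n) ℝ) := by
  constructor
  · intro i j
    by_cases h : i = j <;> simp [Matrix.one_apply, h]
  · intro i; simp [Matrix.one_apply]

lemma stoch_mul {A B : Matrix (Fin n) (Fin n) ℝ} (hA : IsStochastic A) (hB : IsStochastic B) :
    IsStochastic (A * B) := by
  constructor
  · intro i j
    rw [Matrix.mul_apply]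
    exact Finset.sum_nonneg fun l _ => mul_nonneg (hA.1 i l) (hB.1 l j)
  · intro i
    calc ∑ j, (A * B) i j = ∑ j, ∑ l, A i l * B l j := by simp [Matrix.mul_apply]
      _ = ∑ l, ∑ j, A i l * B l j := Finset.sum_comm
      _ = ∑ l, A i l * ∑ j, B l j := by simp [Finset.mul_sum]
      _ = 1 := by simp [hB.2, hA.2 i]

lemma prodFrom_stoch {A : ℕ → Matrix (Fin n) (Fin n) ℝ} (hA : ∀ t, IsStochastic (A t))
    (a m : ℕ) : IsStochastic (prodFrom A a m) := by
  induction m with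
  | zero => exact stoch_one
  | succ m ih => exact stoch_mul (hA _) ih

lemma prodFrom_add {A : ℕ → Matrix (Fin n) (Fin n) ℝ} (a m₁ m₂ : ℕ) :
    prodFrom A a (m₁ + m₂) = prodFrom A (a + m₁) m₂ * prodFrom A a m₁ := by
  induction m₂ with
  | zero => simp [prodFrom]
  | succ m₂ ih =>
    show prodFrom A a (m₁ + m₂ + 1) = _
    rw [show prodFrom A a (m₁ + m₂ + 1) = A (a + (m₁ + m₂)) * prodFrom A a (m₁ + m₂) from rfl,
      ih, show prodFrom A (a + m₁) (m₂ + 1) = A (a + m₁ + m₂) * prodFrom A (a + m₁) m₂ from rfl,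
      Matrix.mul_assoc]
    ring_nf

lemma single_le_mul_apply {P Q : Matrix (Fin n) (Fin n) ℝ}
    (hP : ∀ i j, 0 ≤ P i j) (hQ : ∀ i j, 0 ≤ Q i j) (i l j : Fin n) :
    P i l * Q l j ≤ (P * Q) i j := by
  rw [Matrix.mul_apply]
  exact Finset.single_le_sum (fun k _ => mul_nonneg (hP i k) (hQ k j)) (Finset.mem_univ l)

lemma prodFrom_diag {A : ℕ → Matrix (Fin n) (Fin n) ℝ} (hA : ∀ t, IsStochastic (A t))
    {e : ℝ} (he : 0 ≤ e) (hB2 : ∀ t i, e ≤ A t i i)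
    (a m : ℕ) (i : Fin n) : e ^ m ≤ prodFrom A a m i i := by
  induction m with
  | zero => simp [prodFrom, Matrix.one_apply]
  | succ m ih =>
    calc e ^ (m + 1) = e * e ^ m := by ring
      _ ≤ A (a + m) i i * prodFrom A a m i i :=
        mul_le_mul (hB2 _ i) ih (pow_nonneg he m) (he.trans (hB2 _ i))
      _ ≤ (A (a + m) * prodFrom A a m) i i :=
        single_le_mul_apply (hA _).1 (prodFrom_stoch hA a m).1 i i i
      _ = prodFrom A a (m + 1) i i := rfl

lemma prodFrom_entry_dichotomy {A : ℕ → Matrix (Fin n) (Fin n) ℝ}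
    (hA : ∀ t, IsStochastic (A t)) {e : ℝ} (he : 0 ≤ e)
    (hB1 : ∀ t i j, A t i j = 0 ∨ e ≤ A t i j)
    (a m : ℕ) (i j : Fin n) : prodFrom A a m i j = 0 ∨ e ^ m ≤ prodFrom A a m i j := by
  induction m generalizing i with
  | zero =>
    by_cases h : i = j
    · right; simp [prodFrom, Matrix.one_apply, h]
    · left; simp [prodFrom, Matrix.one_apply, h]
  | succ m ih =>
    by_cases h : ∀ l, A (a + m) i l * prodFrom A a m l j = 0
    · left
      show ∑ l, A (a + m) i l * prodFrom A a m l j = 0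
      exact Finset.sum_eq_zero fun l _ => h l
    · right
      push_neg at h
      obtain ⟨l, hl⟩ := h
      have h1 : e ≤ A (a + m) i l := by
        rcases hB1 (a + m) i l with h' | h'
        · exact absurd (by rw [h', zero_mul]) hl
        · exact h'
      have h2 : e ^ m ≤ prodFrom A a m l j := by
        rcases ih l with h' | h'
        · exact absurd (by rw [h', mul_zero]) hl
        · exact h'
      calc e ^ (m + 1) = e * e ^ m := by ring
        _ ≤ A (a + m) i l * prodFrom A a m l j :=
          mul_le_mul h1 h2 (pow_nonneg he m) (he.trans h1)
        _ ≤ prodFrom A a (m + 1) i j :=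
          single_le_mul_apply (hA _).1 (prodFrom_stoch hA a m).1 i l j

lemma exists_cl (hC : IsClustering C) : ∃ cl : Fin n → Fin K, ∀ p i, i ∈ C p ↔ cl i = p := by
  choose cl hcl using hC.2
  refine ⟨cl, fun p i => ⟨fun h => ?_, fun h => h ▸ hcl i⟩⟩
  by_contra hne
  exact Finset.disjoint_left.mp (hC.1 p (cl i) (Ne.symm hne)) h (hcl i)

lemma sum_clusters (hC : IsClustering C) (f : Fin n → ℝ) :
    ∑ p, ∑ k ∈ C p, f k = ∑ k, f k := by
  obtain ⟨cl, hcl⟩ := exists_cl hC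
  have : ∀ p, C p = Finset.univ.filter (fun i => cl i = p) := by
    intro p; ext i; simp [hcl p i]
  calc ∑ p, ∑ k ∈ C p, f k = ∑ p, ∑ k ∈ Finset.univ.filter (fun i => cl i = p), f k := by
        refine Finset.sum_congr rfl fun p _ => ?_; rw [← this]
    _ = ∑ k, f k := Finset.sum_fiberwise _ _ _

lemma ICC_one (hC : IsClustering C) :
    InterClusterCommonInfluence C (1 : Matrix (Fin n) (Fin n) ℝ) := by
  obtain ⟨cl, hcl⟩ := exists_cl hC
  intro p q i hi i' hi'
  have h1 : ∀ j : Fin n, (1 : Matrix (Fin n) (Fin n) ℝ) j = fun k => if k = j then 1 else 0 := by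
    intro j; ext k; simp [Matrix.one_apply, eq_comm]
  have e1 : ∀ j : Fin n, ∑ l ∈ C q, (1 : Matrix (Fin n) (Fin n) ℝ) j l
      = if j ∈ C q then 1 else 0 := by
    intro j
    simp only [Matrix.one_apply]
    rw [Finset.sum_ite_eq (C q) j (fun _ => (1:ℝ))]
  rw [e1, e1]
  have : (i ∈ C q) ↔ (i' ∈ C q) := by
    rw [hcl q i, hcl q i', (hcl p i).mp hi, (hcl p i').mp hi']
  by_cases h : i ∈ C q
  · rw [if_pos h, if_pos (this.mp h)]
  · rw [if_neg h, if_neg (fun h' => h (this.mpr h'))]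

lemma ICC_mul (hC : IsClustering C) {A B : Matrix (Fin n) (Fin n) ℝ}
    (hA : InterClusterCommonInfluence C A) (hB : InterClusterCommonInfluence C B) :
    InterClusterCommonInfluence C (A * B) := by
  intro p q i hi i' hi'
  have key : ∀ x : Fin n, x ∈ C p → ∑ j ∈ C q, (A * B) x j
      = ∑ r, (∑ k ∈ C r, A x k * ∑ j ∈ C q, B k j) := by
    intro x hx
    calc ∑ j ∈ C q, (A * B) x j = ∑ j ∈ C q, ∑ k, A x k * B k j := by
          simp [Matrix.mul_apply]
      _ = ∑ k, ∑ j ∈ C q, A x k * B k j := Finset.sum_comm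
      _ = ∑ k, A x k * ∑ j ∈ C q, B k j := by simp [Finset.mul_sum]
      _ = ∑ r, ∑ k ∈ C r, A x k * ∑ j ∈ C q, B k j := (sum_clusters hC _).symm
  rw [key i hi, key i' hi']
  refine Finset.sum_congr rfl fun r _ => ?_
  rcases (C r).eq_empty_or_nonempty with h | ⟨k₀, hk₀⟩
  · simp [h]
  have hgc : ∀ k ∈ C r, A i k * ∑ j ∈ C q, B k j = A i k * ∑ j ∈ C q, B k₀ j :=
    fun k hk => by rw [hB r q k hk k₀ hk₀]
  have hgc' : ∀ k ∈ C r, A i' k * ∑ j ∈ C q, B k j = A i' k * ∑ j ∈ C q, B k₀ j :=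
    fun k hk => by rw [hB r q k hk k₀ hk₀]
  rw [Finset.sum_congr rfl hgc, Finset.sum_congr rfl hgc', ← Finset.sum_mul, ← Finset.sum_mul,
    hA p r i hi i' hi']

lemma entry_le_one {A : Matrix (Fin n) (Fin n) ℝ} (hA : IsStochastic A) (i j : Fin n) :
    A i j ≤ 1 := by
  rw [← hA.2 i]
  exact Finset.single_le_sum (fun k _ => hA.1 i k) (Finset.mem_univ j)

lemma DeltaC_nonneg (A : Matrix (Fin n) (Fin n) ℝ) : 0 ≤ DeltaC C A :=
  Real.sSup_nonneg fun d ⟨p, i, hi, j, hj, k, hd⟩ => hd ▸ abs_nonneg _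

lemma DeltaC_le_one {A : Matrix (Fin n) (Fin n) ℝ} (hA : IsStochastic A) :
    DeltaC C A ≤ 1 := by
  apply Real.sSup_le _ zero_le_one
  rintro d ⟨p, i, hi, j, hj, k, rfl⟩
  rw [abs_sub_le_iff]
  constructor <;> [skip; skip] <;>
    linarith [entry_le_one hA i k, entry_le_one hA j k, hA.1 i k, hA.1 j k]

lemma abs_le_DeltaC {A : Matrix (Fin n) (Fin n) ℝ} (hA : IsStochastic A)
    {p : Fin K} {i j : Fin n} (hi : i ∈ C p) (hj : j ∈ C p) (k : Fin n) :
    |A i k - A j k| ≤ DeltaC C A := by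
  apply le_csSup
  · refine ⟨1, ?_⟩
    rintro d ⟨p', i', hi', j', hj', k', rfl⟩
    rw [abs_sub_le_iff]
    constructor <;>
      linarith [entry_le_one hA i' k', entry_le_one hA j' k', hA.1 i' k', hA.1 j' k']
  · exact ⟨p, i, hi, j, hj, k, rfl⟩

lemma muC_bddBelow (A : Matrix (Fin n) (Fin n) ℝ) (hA : ∀ i j, 0 ≤ A i j) :
    BddBelow {s | ∃ p, ∃ i ∈ C p, ∃ j ∈ C p, s = ∑ k, min (A i k) (A j k)} := by
  refine ⟨0, ?_⟩
  rintro s ⟨p, i, hi, j, hj, rfl⟩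
  exact Finset.sum_nonneg fun k _ => le_min (hA i k) (hA j k)

lemma muC_le {A : Matrix (Fin n) (Fin n) ℝ} (hA : ∀ i j, 0 ≤ A i j)
    {p : Fin K} {i j : Fin n} (hi : i ∈ C p) (hj : j ∈ C p) :
    muC C A ≤ ∑ k, min (A i k) (A j k) :=
  csInf_le (muC_bddBelow A hA) ⟨p, i, hi, j, hj, rfl⟩

lemma muC_le_one {A : Matrix (Fin n) (Fin n) ℝ} (hA : IsStochastic A) :
    muC C A ≤ 1 := by
  rcases Set.eq_empty_or_nonempty {s | ∃ p, ∃ i ∈ C p, ∃ j ∈ C p,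
      s = ∑ k, min (A i k) (A j k)} with h | ⟨s, p, i, hi, j, hj, hs⟩
  · rw [muC, h, Real.sInf_empty]; exact zero_le_one
  · refine le_trans (muC_le hA.1 hi hj) ?_
    rw [← hA.2 i]
    exact Finset.sum_le_sum fun k _ => min_le_left _ _

lemma contraction (hC : IsClustering C) {W B : Matrix (Fin n) (Fin n) ℝ}
    (hW : IsStochastic W) (hWI : InterClusterCommonInfluence C W) (hB : IsStochastic B) :
    DeltaC C (W * B) ≤ (1 - muC C W) * DeltaC C B := by
  have hΔB0 : 0 ≤ DeltaC C B := DeltaC_nonneg B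
  have hμ1 : muC C W ≤ 1 := muC_le_one hW
  apply Real.sSup_le _ (mul_nonneg (by linarith) hΔB0)
  rintro d ⟨p, i, hi, j, hj, k, rfl⟩
  set m : Fin n → ℝ := fun l => min (W i l) (W j l) with hm
  have hμle : muC C W ≤ ∑ l, m l := muC_le hW.1 hi hj
  -- representatives
  have hcex : ∀ r : Fin K, ∃ cr : ℝ, ∀ l ∈ C r, cr ≤ B l k ∧ B l k - cr ≤ DeltaC C B := by
    intro r
    rcases (C r).eq_empty_or_nonempty with h | h
    · exact ⟨0, by simp [h]⟩
    · obtain ⟨l₀, hl₀, hmin⟩ := Finset.exists_min_image (C r) (fun l => B l k) h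
      refine ⟨B l₀ k, fun l hl => ⟨hmin l hl, ?_⟩⟩
      calc B l k - B l₀ k ≤ |B l k - B l₀ k| := le_abs_self _
        _ ≤ DeltaC C B := abs_le_DeltaC hB hl hl₀ k
  choose c hc using hcex
  have hsum0 : ∀ r, ∑ l ∈ C r, (W i l - W j l) = 0 := fun r => by
    rw [Finset.sum_sub_distrib, hWI p r i hi j hj, sub_self]
  have key : (W * B) i k - (W * B) j k
      = ∑ r, ∑ l ∈ C r, (W i l - W j l) * (B l k - c r) := by
    have e1 : (W * B) i k - (W * B) j k = ∑ l, (W i l - W j l) * B l k := by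
      simp only [Matrix.mul_apply, ← Finset.sum_sub_distrib, sub_mul]
    rw [e1, ← sum_clusters hC (fun l => (W i l - W j l) * B l k)]
    refine Finset.sum_congr rfl fun r _ => ?_
    have : ∑ l ∈ C r, (W i l - W j l) * (B l k - c r)
        = ∑ l ∈ C r, (W i l - W j l) * B l k
          - (∑ l ∈ C r, (W i l - W j l)) * c r := by
      rw [Finset.sum_mul, ← Finset.sum_sub_distrib]
      exact Finset.sum_congr rfl fun l _ => by ring
    rw [this, hsum0, zero_mul, sub_zero]
  -- per cluster bound
  have hml_i : ∀ l, m l ≤ W i l := fun l => min_le_left _ _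
  have hml_j : ∀ l, m l ≤ W j l := fun l => min_le_right _ _
  have habs : ∀ r, |∑ l ∈ C r, (W i l - W j l) * (B l k - c r)|
      ≤ (∑ l ∈ C r, (W i l - m l)) * DeltaC C B := by
    intro r
    have hσeq : ∑ l ∈ C r, (W i l - m l) = ∑ l ∈ C r, (W j l - m l) := by
      rw [Finset.sum_sub_distrib, Finset.sum_sub_distrib, hWI p r i hi j hj]
    rw [abs_le]
    constructor
    · rw [hσeq, Finset.sum_mul, ← Finset.sum_neg_distrib]
      refine Finset.sum_le_sum fun l hl => ?_
      have hX0 := (hc r l hl).1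
      have hXΔ := (hc r l hl).2
      calc -((W j l - m l) * DeltaC C B) ≤ -((W j l - m l) * (B l k - c r)) :=
            neg_le_neg (mul_le_mul_of_nonneg_left hXΔ (by linarith [hml_j l]))
        _ = (m l - W j l) * (B l k - c r) := by ring
        _ ≤ (W i l - W j l) * (B l k - c r) :=
            mul_le_mul_of_nonneg_right (by linarith [hml_i l]) (by linarith)
    · rw [Finset.sum_mul]
      refine Finset.sum_le_sum fun l hl => ?_
      calc (W i l - W j l) * (B l k - c r) ≤ (W i l - m l) * (B l k - c r) :=
            mul_le_mul_of_nonneg_right (by linarith [hml_j l]) (by linarith [(hc r l hl).1])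
        _ ≤ (W i l - m l) * DeltaC C B :=
            mul_le_mul_of_nonneg_left (hc r l hl).2 (by linarith [hml_i l])
  -- combine
  calc |(W * B) i k - (W * B) j k|
      ≤ ∑ r, |∑ l ∈ C r, (W i l - W j l) * (B l k - c r)| := by
        rw [key]; exact Finset.abs_sum_le_sum_abs _ _
    _ ≤ ∑ r, (∑ l ∈ C r, (W i l - m l)) * DeltaC C B := Finset.sum_le_sum fun r _ => habs r
    _ = (∑ r, ∑ l ∈ C r, (W i l - m l)) * DeltaC C B := by rw [Finset.sum_mul]
    _ = (1 - ∑ l, m l) * DeltaC C B := by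
        rw [sum_clusters hC, Finset.sum_sub_distrib, hW.2 i]
    _ ≤ (1 - muC C W) * DeltaC C B := by
        apply mul_le_mul_of_nonneg_right _ hΔB0
        linarith

-- edge realization inside a window
lemma prodFrom_edge {A : ℕ → Matrix (Fin n) (Fin n) ℝ} (hA : ∀ t, IsStochastic (A t))
    {e : ℝ} (he : 0 < e) (hB2 : ∀ t i, e ≤ A t i i)
    {a m s : ℕ} (hs : s < m) {i k : Fin n} (hpos : 0 < A (a + s) i k) :
    0 < prodFrom A a m i k := by
  have hsplit : prodFrom A a m
      = prodFrom A (a + (s + 1)) (m - (s + 1)) * prodFrom A a (s + 1) := by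
    conv_lhs => rw [show m = (s + 1) + (m - (s + 1)) by omega]
    rw [prodFrom_add]
  have h1 : 0 < prodFrom A (a + (s + 1)) (m - (s + 1)) i i :=
    lt_of_lt_of_le (pow_pos he _) (prodFrom_diag hA he.le hB2 _ _ i)
  have h2 : 0 < prodFrom A a (s + 1) i k := by
    have : 0 < A (a + s) i k * prodFrom A a s k k :=
      mul_pos hpos (lt_of_lt_of_le (pow_pos he _) (prodFrom_diag hA he.le hB2 _ _ k))
    calc (0:ℝ) < A (a + s) i k * prodFrom A a s k k := this
      _ ≤ (A (a + s) * prodFrom A a s) i k :=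
        single_le_mul_apply (hA _).1 (prodFrom_stoch hA a s).1 i k k
      _ = prodFrom A a (s + 1) i k := rfl
  calc (0:ℝ) < prodFrom A (a + (s + 1)) (m - (s + 1)) i i * prodFrom A a (s + 1) i k :=
        mul_pos h1 h2
    _ ≤ (prodFrom A (a + (s + 1)) (m - (s + 1)) * prodFrom A a (s + 1)) i k :=
        single_le_mul_apply (prodFrom_stoch hA _ _).1 (prodFrom_stoch hA _ _).1 i i k
    _ = prodFrom A a m i k := by rw [← hsplit]

/-- Core combinatorial lemma: common positive column over `2 n L` steps. -/
lemma common_influencer {A : ℕ → Matrix (Fin n) (Fin n) ℝ} (hA : ∀ t, IsStochastic (A t))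
    {e : ℝ} (he : 0 < e) (hB2 : ∀ t i, e ≤ A t i i)
    {L : ℕ} (hL : 0 < L)
    (hspan : ∀ t, HasClusterSpanningTrees C (∑ s ∈ Finset.range L, A (t + s)))
    (t₀ : ℕ) (p : Fin K) {i j : Fin n} (hi : i ∈ C p) (hj : j ∈ C p) :
    ∃ v, 0 < prodFrom A t₀ (2 * n * L) i v ∧ 0 < prodFrom A t₀ (2 * n * L) j v := by
  set S : ℕ → Matrix (Fin n) (Fin n) ℝ :=
    fun r => prodFrom A (t₀ + (2 * n - r) * L) (r * L) with hS
  set W : ℕ → Matrix (Fin n) (Fin n) ℝ :=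
    fun r => prodFrom A (t₀ + (2 * n - r - 1) * L) L with hW
  have hSstoch : ∀ r, IsStochastic (S r) := fun r => prodFrom_stoch hA _ _
  have hWstoch : ∀ r, IsStochastic (W r) := fun r => prodFrom_stoch hA _ _
  have hstep : ∀ r, r < 2 * n → S (r + 1) = S r * W r := by
    intro r hr
    have h1 : (r + 1) * L = L + r * L := by ring
    have h2 : t₀ + (2 * n - (r + 1)) * L + L = t₀ + (2 * n - r) * L := by
      have : (2 * n - (r + 1)) + 1 = 2 * n - r := by omega
      calc t₀ + (2 * n - (r + 1)) * L + L = t₀ + ((2 * n - (r + 1)) + 1) * L := by ring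
        _ = t₀ + (2 * n - r) * L := by rw [this]
    have h3 : 2 * n - (r + 1) = 2 * n - r - 1 := by omega
    show prodFrom A (t₀ + (2 * n - (r + 1)) * L) ((r + 1) * L) = _
    rw [h1, prodFrom_add, h2, h3]
  set U : ℕ → Fin n → Finset (Fin n) :=
    fun r x => Finset.univ.filter (fun k => 0 < S r x k) with hU
  have hWdiag : ∀ r l, 0 < W r l l :=
    fun r l => lt_of_lt_of_le (pow_pos he _) (prodFrom_diag hA he.le hB2 _ _ l)
  have hpushmem : ∀ r x w₁ w, r < 2 * n → w₁ ∈ U r x → 0 < W r w₁ w →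
      0 < S (r + 1) x w := by
    intro r x w₁ w hr hw₁ hpos
    rw [hU] at hw₁
    simp only [Finset.mem_filter] at hw₁
    rw [hstep r hr]
    calc (0:ℝ) < S r x w₁ * W r w₁ w := mul_pos hw₁.2 hpos
      _ ≤ (S r * W r) x w := single_le_mul_apply (hSstoch r).1 (hWstoch r).1 x w₁ w
  have hmono : ∀ r x, r < 2 * n → U r x ⊆ U (r + 1) x := by
    intro r x hr k hk
    simp only [hU, Finset.mem_filter, Finset.mem_univ, true_and]
    have := hpushmem r x k k hr hk (hWdiag r k)
    exact this
  -- path lemma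
  have hpath : ∀ r x, r < 2 * n → ∀ w, Reaches (∑ s ∈ Finset.range L,
      A (t₀ + (2 * n - r - 1) * L + s)) w x → x ∈ U r x →
      w ∈ U r x ∨ ∃ k, k ∉ U r x ∧ k ∈ U (r + 1) x := by
    intro r x hr w hreach hx
    induction hreach using Relation.ReflTransGen.head_induction_on with
    | refl => exact Or.inl hx
    | head hrel _ ih =>
      rename_i w' w₁ _
      rcases ih with h1 | h1
      · -- w₁ ∈ U r x; edge from w' to w₁ : 0 < G w₁ w'
        have hedge : ∃ s < L, 0 < A (t₀ + (2 * n - r - 1) * L + s) w₁ w' := by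
          by_contra hcon
          push_neg at hcon
          have : (∑ s ∈ Finset.range L, A (t₀ + (2 * n - r - 1) * L + s)) w₁ w' ≤ 0 := by
            rw [Matrix.sum_apply]
            apply Finset.sum_nonpos
            intro s hs
            rcases lt_or_ge 0 (A (t₀ + (2 * n - r - 1) * L + s) w₁ w') with h | h
            · exact absurd h (not_lt.mpr (hcon s (Finset.mem_range.mp hs)))
            · exact h
          exact absurd hrel (not_lt.mpr this)
        obtain ⟨s, hsL, hApos⟩ := hedge
        have hWpos : 0 < W r w₁ w' := prodFrom_edge hA he hB2 hsL hApos
        by_cases hw' : w' ∈ U r x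
        · exact Or.inl hw'
        · refine Or.inr ⟨w', hw', ?_⟩
          simp only [hU, Finset.mem_filter, Finset.mem_univ, true_and]
          exact hpushmem r x w₁ w' hr h1 hWpos
      · exact Or.inr h1
  -- growth invariant
  have hn : 0 < n := i.pos
  have hinv : ∀ r, r ≤ 2 * n →
      (∃ v, 0 < S r i v ∧ 0 < S r j v) ∨ r + 2 ≤ (U r i).card + (U r j).card := by
    intro r
    induction r with
    | zero =>
      intro _
      right
      have hself : ∀ x : Fin n, x ∈ U 0 x := by
        intro x
        simp only [hU, Finset.mem_filter, Finset.mem_univ, true_and]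
        have hS0 : S 0 = 1 := by simp only [hS, Nat.zero_mul]; rfl
        rw [hS0]
        simp [Matrix.one_apply]
      have h1 : 1 ≤ (U 0 i).card := Finset.card_pos.mpr ⟨i, hself i⟩
      have h2 : 1 ≤ (U 0 j).card := Finset.card_pos.mpr ⟨j, hself j⟩
      omega
    | succ r ih =>
      intro hr1
      have hr : r < 2 * n := by omega
      rcases ih (by omega) with ⟨v, hv1, hv2⟩ | hcard
      · left
        refine ⟨v, ?_, ?_⟩
        · rw [hstep r hr]
          calc (0:ℝ) < S r i v * W r v v := mul_pos hv1 (hWdiag r v)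
            _ ≤ (S r * W r) i v := single_le_mul_apply (hSstoch r).1 (hWstoch r).1 i v v
        · rw [hstep r hr]
          calc (0:ℝ) < S r j v * W r v v := mul_pos hv2 (hWdiag r v)
            _ ≤ (S r * W r) j v := single_le_mul_apply (hSstoch r).1 (hWstoch r).1 j v v
      · obtain ⟨z, hz⟩ := hspan (t₀ + (2 * n - r - 1) * L) p
        have hxU : ∀ x : Fin n, x ∈ U r x := by
          intro x
          simp only [hU, Finset.mem_filter, Finset.mem_univ, true_and]
          exact lt_of_lt_of_le (pow_pos he _) (prodFrom_diag hA he.le hB2 _ _ x)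
        have hxiU : i ∈ U r i := hxU i
        have hxjU : j ∈ U r j := hxU j
        rcases hpath r i hr z (hz i hi) hxiU with hzi | ⟨k, hk1, hk2⟩
        · rcases hpath r j hr z (hz j hj) hxjU with hzj | ⟨k, hk1, hk2⟩
          · -- z in both: done
            left
            refine ⟨z, ?_, ?_⟩
            · have := hmono r i hr hzi
              simpa [hU, Finset.mem_filter] using this
            · have := hmono r j hr hzj
              simpa [hU, Finset.mem_filter] using this
          · -- growth in j
            right
            have hgrow : (U r j).card + 1 ≤ (U (r + 1) j).card :=
              Finset.card_lt_card ⟨hmono r j hr, fun hsub => hk1 (hsub hk2)⟩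
            have hmi : (U r i).card ≤ (U (r + 1) i).card := Finset.card_le_card (hmono r i hr)
            omega
        · right
          have hgrow : (U r i).card + 1 ≤ (U (r + 1) i).card :=
            Finset.card_lt_card ⟨hmono r i hr, fun hsub => hk1 (hsub hk2)⟩
          have hmj : (U r j).card ≤ (U (r + 1) j).card := Finset.card_le_card (hmono r j hr)
          omega
  rcases hinv (2 * n) le_rfl with ⟨v, hv1, hv2⟩ | hcard
  · refine ⟨v, ?_, ?_⟩
    · have : S (2 * n) = prodFrom A t₀ (2 * n * L) := by
        rw [hS]; simp
      rwa [← this]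
    · have : S (2 * n) = prodFrom A t₀ (2 * n * L) := by
        rw [hS]; simp
      rwa [← this]
  · exfalso
    have h1 : (U (2 * n) i).card ≤ n := le_trans (Finset.card_le_univ _) (by simp)
    have h2 : (U (2 * n) j).card ≤ n := le_trans (Finset.card_le_univ _) (by simp)
    omega

lemma prodFrom_ICC {A : ℕ → Matrix (Fin n) (Fin n) ℝ} (hC : IsClustering C)
    (hI : ∀ t, InterClusterCommonInfluence C (A t)) (a m : ℕ) :
    InterClusterCommonInfluence C (prodFrom A a m) := by
  induction m with
  | zero => exact ICC_one hC
  | succ m ih => exact ICC_mul hC (hI _) ih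

lemma muC_nonneg {A : Matrix (Fin n) (Fin n) ℝ} (hA : ∀ i j, 0 ≤ A i j) :
    0 ≤ muC C A :=
  Real.sInf_nonneg fun s ⟨p, i, hi, j, hj, hs⟩ =>
    hs ▸ Finset.sum_nonneg fun k _ => le_min (hA i k) (hA j k)

end Stmt14Aux

open Stmt14Aux in
theorem stmt14 {n K : ℕ} (C : Fin K → Finset (Fin n)) (hC : IsClustering C)
    (A : ℕ → Matrix (Fin n) (Fin n) ℝ)
    (hstoch : ∀ t, IsStochastic (A t))
    (e : ℝ) (he : 0 < e)
    (hB1 : ∀ t i j, A t i j = 0 ∨ e ≤ A t i j)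
    (hB2 : ∀ t i, e ≤ A t i i)
    (hB3 : ∀ t, InterClusterCommonInfluence C (A t))
    (L : ℕ) (hL : 0 < L)
    (hspan : ∀ t, HasClusterSpanningTrees C (∑ s ∈ Finset.range L, A (t + s))) :
    ∃ M q : ℝ, 0 ≤ M ∧ 0 < q ∧ q < 1 ∧
      ∀ t : ℕ, 1 ≤ t → DeltaC C (prodFrom A 0 t) ≤ M * q ^ t := by
  classical
  rcases Nat.eq_zero_or_pos n with hn | hn
  · -- degenerate: no vertices
    refine ⟨2, 1/2, by norm_num, by norm_num, by norm_num, fun t ht => ?_⟩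
    have hempty : {d | ∃ p, ∃ i ∈ C p, ∃ j ∈ C p, ∃ k, d = |prodFrom A 0 t i k - prodFrom A 0 t j k|} = (∅ : Set ℝ) := by
      ext d
      simp only [Set.mem_setOf_eq, Set.mem_empty_iff_false, iff_false]
      rintro ⟨p, i, -⟩
      exact absurd i.isLt (by omega)
    rw [DeltaC, hempty, Real.sSup_empty]
    positivity
  -- main case
  set e' : ℝ := min e (1/2) with he'def
  have he' : 0 < e' := lt_min he (by norm_num)
  have he'half : e' ≤ 1/2 := min_le_right _ _
  have hB1' : ∀ t i j, A t i j = 0 ∨ e' ≤ A t i j := by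
    intro t i j
    rcases hB1 t i j with h | h
    · exact Or.inl h
    · exact Or.inr (le_trans (min_le_left _ _) h)
  have hB2' : ∀ t i, e' ≤ A t i i := fun t i => le_trans (min_le_left _ _) (hB2 t i)
  set T : ℕ := 2 * n * L with hTdef
  have hT : 0 < T := by positivity
  set δ : ℝ := e' ^ T with hδdef
  have hδ0 : 0 < δ := pow_pos he' T
  have hδhalf : δ ≤ 1/2 := by
    calc e' ^ T ≤ e' ^ 1 := pow_le_pow_of_le_one he'.le (by linarith) hT
      _ = e' := pow_one e'
      _ ≤ 1/2 := he'half
  set q0 : ℝ := 1 - δ with hq0def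
  have hq0pos : 0 < q0 := by simp only [hq0def]; linarith
  have hq0lt1 : q0 < 1 := by simp only [hq0def]; linarith
  have hq0half : 1/2 ≤ q0 := by simp only [hq0def]; linarith
  -- lower bound on muC of T-step products
  have hmu : ∀ t₀ : ℕ, δ ≤ muC C (prodFrom A t₀ T) := by
    intro t₀
    have i₀ : Fin n := ⟨0, hn⟩
    obtain ⟨p₀, hp₀⟩ := hC.2 i₀
    refine le_csInf ⟨_, p₀, i₀, hp₀, i₀, hp₀, rfl⟩ ?_
    rintro s ⟨p, i, hi, j, hj, rfl⟩
    obtain ⟨v, hv1, hv2⟩ := common_influencer hstoch he' hB2' hL hspan t₀ p hi hj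
    have hP := prodFrom_stoch hstoch t₀ T
    have hiv : e' ^ T ≤ prodFrom A t₀ T i v := by
      rcases prodFrom_entry_dichotomy hstoch he'.le hB1' t₀ T i v with h | h
      · exact absurd h (ne_of_gt hv1)
      · exact h
    have hjv : e' ^ T ≤ prodFrom A t₀ T j v := by
      rcases prodFrom_entry_dichotomy hstoch he'.le hB1' t₀ T j v with h | h
      · exact absurd h (ne_of_gt hv2)
      · exact h
    calc δ = e' ^ T := hδdef
      _ ≤ min (prodFrom A t₀ T i v) (prodFrom A t₀ T j v) := le_min hiv hjv
      _ ≤ ∑ k, min (prodFrom A t₀ T i k) (prodFrom A t₀ T j k) :=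
        Finset.single_le_sum (fun k _ => le_min (hP.1 i k) (hP.1 j k)) (Finset.mem_univ v)
  -- one contraction step
  have hstepT : ∀ a m : ℕ, DeltaC C (prodFrom A a (m + T))
      ≤ q0 * DeltaC C (prodFrom A a m) := by
    intro a m
    rw [prodFrom_add]
    calc DeltaC C (prodFrom A (a + m) T * prodFrom A a m)
        ≤ (1 - muC C (prodFrom A (a + m) T)) * DeltaC C (prodFrom A a m) :=
          contraction hC (prodFrom_stoch hstoch _ _) (prodFrom_ICC hC hB3 _ _)
            (prodFrom_stoch hstoch _ _)
      _ ≤ q0 * DeltaC C (prodFrom A a m) := by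
          apply mul_le_mul_of_nonneg_right _ (DeltaC_nonneg _)
          have := hmu (a + m)
          simp only [hq0def]
          linarith
  have hiter : ∀ m : ℕ, DeltaC C (prodFrom A 0 (m * T)) ≤ q0 ^ m := by
    intro m
    induction m with
    | zero =>
      rw [Nat.zero_mul, pow_zero]
      exact DeltaC_le_one (prodFrom_stoch hstoch 0 0)
    | succ m ih =>
      rw [show (m + 1) * T = m * T + T by ring, pow_succ]
      calc DeltaC C (prodFrom A 0 (m * T + T)) ≤ q0 * DeltaC C (prodFrom A 0 (m * T)) :=
            hstepT 0 (m * T)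
        _ ≤ q0 * q0 ^ m := mul_le_mul_of_nonneg_left ih hq0pos.le
        _ = q0 ^ m * q0 := by ring
  -- remainder handling
  have hrem : ∀ t : ℕ, DeltaC C (prodFrom A 0 t) ≤ q0 ^ (t / T) := by
    intro t
    have ht : t = t / T * T + t % T := by
      rw [Nat.mul_comm (t / T) T]
      exact (Nat.div_add_mod t T).symm
    calc DeltaC C (prodFrom A 0 t)
        = DeltaC C (prodFrom A (0 + t / T * T) (t % T) * prodFrom A 0 (t / T * T)) := by
          rw [← prodFrom_add, ← ht]
      _ ≤ (1 - muC C (prodFrom A (0 + t / T * T) (t % T))) * DeltaC C (prodFrom A 0 (t / T * T)) :=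
          contraction hC (prodFrom_stoch hstoch _ _) (prodFrom_ICC hC hB3 _ _)
            (prodFrom_stoch hstoch _ _)
      _ ≤ 1 * q0 ^ (t / T) := by
          apply mul_le_mul (by linarith [muC_nonneg (C := C) (prodFrom_stoch hstoch (0 + t / T * T) (t % T)).1])
            (hiter (t / T)) (DeltaC_nonneg _) zero_le_one
      _ = q0 ^ (t / T) := one_mul _
  -- conclude
  refine ⟨2, q0 ^ ((T : ℝ))⁻¹, by norm_num, Real.rpow_pos_of_pos hq0pos _,
    Real.rpow_lt_one hq0pos.le hq0lt1 (by positivity), ?_⟩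
  intro t ht
  have hqt : (q0 ^ ((T : ℝ))⁻¹) ^ t = q0 ^ ((t : ℝ) * ((T : ℝ))⁻¹) := by
    rw [← Real.rpow_natCast (q0 ^ ((T : ℝ))⁻¹) t, ← Real.rpow_mul hq0pos.le]
    ring_nf
  have hexp : (t : ℝ) * ((T : ℝ))⁻¹ ≤ ((t / T : ℕ) : ℝ) + 1 := by
    rw [mul_inv_le_iff₀ (by positivity : (0:ℝ) < (T:ℝ))]
    have h1 : t < (t / T + 1) * T := by
      have h2 := Nat.mod_lt t hT
      have h3 := Nat.div_add_mod t T
      calc t = T * (t / T) + t % T := h3.symm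
        _ < T * (t / T) + T := by omega
        _ = (t / T + 1) * T := by ring
    push_cast
    calc (t : ℝ) ≤ ((t / T + 1) * T : ℕ) := by exact_mod_cast h1.le
      _ = (((t / T : ℕ) : ℝ) + 1) * (T : ℝ) := by push_cast; ring
  have hmono : q0 ^ (((t / T : ℕ) : ℝ) + 1) ≤ q0 ^ ((t : ℝ) * ((T : ℝ))⁻¹) :=
    Real.rpow_le_rpow_of_exponent_ge hq0pos hq0lt1.le hexp
  have hnat : q0 ^ (((t / T : ℕ) : ℝ) + 1) = q0 ^ (t / T) * q0 := by
    rw [show (((t / T : ℕ) : ℝ) + 1) = (((t / T + 1 : ℕ)) : ℝ) by push_cast; ring,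
      Real.rpow_natCast, pow_succ]
  calc DeltaC C (prodFrom A 0 t) ≤ q0 ^ (t / T) := hrem t
    _ ≤ 2 * (q0 ^ (t / T) * q0) := by
        have hp : 0 < q0 ^ (t / T) := pow_pos hq0pos _
        nlinarith
    _ = 2 * q0 ^ (((t / T : ℕ) : ℝ) + 1) := by rw [hnat]
    _ ≤ 2 * q0 ^ ((t : ℝ) * ((T : ℝ))⁻¹) := by linarith [hmono]
    _ = 2 * (q0 ^ ((T : ℝ))⁻¹) ^ t := by rw [hqt]
end

section
/- Let C = {C_1,…,C_K} be a clustering of {1,…,n} and let A be an n×n stochastic matrix that has all diagonal entries positive, has inter-cluster common influence w.r.t. C, and has cluster-spanning-trees w.r.t. C. Then every right eigenvector of A for the eigenvalue 1 lies in the cluster-consensus subspace: if v ∈ ℝ^n satisfies A v = v, then v ∈ S_C. -/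
open Finset Filter Topology Matrix

/-!
Let `Δ > 0` be the largest difference `v i - v j` between two entries of `v` in a common cluster.
As `v = A v`, this gap is the sum over clusters `q` of the differences of the `A i`- and
`A j`-weighted sums of `v` over `C q`. Common influence gives both weightings the same mass `c_q`
on `C q`, so the `q`-term is at most `c_q Δ`, and these bounds add up to exactly `Δ`. Hence every
`k` with `A i k > 0` is again the largest entry of its cluster and realizes the gap `Δ` there.
Walking back along a path from the root `r` of the spanning tree of the cluster of `i` and `j`,
the root realizes `Δ` both as a largest and (applying this to `-v`) as a smallest entry of its
cluster, so that cluster contains a difference `2Δ > Δ`.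
-/

lemma IsClustering.sum_eq_sum_sum {n K : ℕ} {C : Fin K → Finset (Fin n)} (hC : IsClustering C)
    {M : Type*} [AddCommMonoid M] (g : Fin n → M) : ∑ k, g k = ∑ q, ∑ k ∈ C q, g k := by
  have hcover : univ.biUnion C = univ :=
    eq_univ_of_forall fun k => mem_biUnion.2 <| (hC.2 k).imp fun p hp => ⟨mem_univ p, hp⟩
  rw [← sum_biUnion fun p _ q _ hpq => hC.1 p q hpq, hcover]

lemma IsClustering.eq_of_mem {n K : ℕ} {C : Fin K → Finset (Fin n)} (hC : IsClustering C)
    {i : Fin n} {p q : Fin K} (hp : i ∈ C p) (hq : i ∈ C q) : p = q := by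
  by_contra hpq
  exact disjoint_left.mp (hC.1 p q hpq) hp hq

section WeightedSums

variable {ι : Type*} {s : Finset ι} {w w' v : ι → ℝ} {Δ : ℝ}

lemma sum_mul_le_sum_mul_of_le {x : ℝ} (hw : ∀ m ∈ s, 0 ≤ w m) (hx : ∀ m ∈ s, x ≤ v m) :
    (∑ m ∈ s, w m) * x ≤ ∑ m ∈ s, w m * v m := by
  rw [sum_mul]
  exact sum_le_sum fun m hm => mul_le_mul_of_nonneg_left (hx m hm) (hw m hm)

lemma sum_mul_sub_sum_mul_le (hw : ∀ m ∈ s, 0 ≤ w m) (hw' : ∀ m ∈ s, 0 ≤ w' m)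
    (hsum : ∑ m ∈ s, w' m = ∑ m ∈ s, w m) (hosc : ∀ a ∈ s, ∀ b ∈ s, v a - v b ≤ Δ) :
    ∑ m ∈ s, w m * v m - ∑ m ∈ s, w' m * v m ≤ (∑ m ∈ s, w m) * Δ := by
  rcases s.eq_empty_or_nonempty with rfl | hs
  · simp
  obtain ⟨l, hl, hmin⟩ := s.exists_min_image v hs
  have upper : ∑ m ∈ s, w m * v m ≤ (∑ m ∈ s, w m) * (v l + Δ) := by
    rw [sum_mul]
    exact sum_le_sum fun m hm =>
      mul_le_mul_of_nonneg_left (by linarith [hosc m hm l hl]) (hw m hm)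
  have lower := hsum ▸ sum_mul_le_sum_mul_of_le hw' hmin
  linarith

lemma sum_mul_sub_sum_mul_lt (hw : ∀ m ∈ s, 0 ≤ w m) (hw' : ∀ m ∈ s, 0 ≤ w' m)
    (hsum : ∑ m ∈ s, w' m = ∑ m ∈ s, w m) (hosc : ∀ a ∈ s, ∀ b ∈ s, v a - v b ≤ Δ)
    {k : ι} (hk : k ∈ s) (hwk : 0 < w k) (hvk : ∀ l ∈ s, v k - v l < Δ) :
    ∑ m ∈ s, w m * v m - ∑ m ∈ s, w' m * v m < (∑ m ∈ s, w m) * Δ := by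
  obtain ⟨l, hl, hmin⟩ := s.exists_min_image v ⟨k, hk⟩
  have upper : ∑ m ∈ s, w m * v m < (∑ m ∈ s, w m) * (v l + Δ) := by
    rw [sum_mul]
    exact sum_lt_sum
      (fun m hm => mul_le_mul_of_nonneg_left (by linarith [hosc m hm l hl]) (hw m hm))
      ⟨k, hk, mul_lt_mul_of_pos_left (by linarith [hvk l hl]) hwk⟩
  have lower := hsum ▸ sum_mul_le_sum_mul_of_le hw' hmin
  linarith

end WeightedSums

section ClusterGap

variable {n K : ℕ} {C : Fin K → Finset (Fin n)} {A : Matrix (Fin n) (Fin n) ℝ}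
  {v : Fin n → ℝ} {Δ : ℝ}

def AttainsClusterGap (C : Fin K → Finset (Fin n)) (v : Fin n → ℝ) (Δ : ℝ) (i : Fin n) : Prop :=
  ∃ p, i ∈ C p ∧ ∃ j ∈ C p, v i - v j = Δ

lemma exists_clusterGap_max (v : Fin n → ℝ) {p : Fin K} {a : Fin n} (ha : a ∈ C p) :
    ∃ q, ∃ i ∈ C q, ∃ j ∈ C q, ∀ p, ∀ a ∈ C p, ∀ b ∈ C p, v a - v b ≤ v i - v j := by
  let pairs := (univ : Finset (Fin K × Fin n × Fin n)).filter
    fun t => t.2.1 ∈ C t.1 ∧ t.2.2 ∈ C t.1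
  obtain ⟨⟨q, i, j⟩, hij, hmax⟩ :=
    pairs.exists_max_image (fun t => v t.2.1 - v t.2.2) ⟨(p, a, a), by simp [pairs, ha]⟩
  simp only [pairs, mem_filter, mem_univ, true_and] at hij
  exact ⟨q, i, hij.1, j, hij.2, fun p a ha b hb => hmax (p, a, b) (by simp [pairs, ha, hb])⟩

lemma AttainsClusterGap.of_pos (hC : IsClustering C) (hA : IsStochastic A)
    (hinfl : InterClusterCommonInfluence C A) (hv : A *ᵥ v = v)
    (hosc : ∀ p, ∀ a ∈ C p, ∀ b ∈ C p, v a - v b ≤ Δ) {i k : Fin n}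
    (hi : AttainsClusterGap C v Δ i) (hik : 0 < A i k) : AttainsClusterGap C v Δ k := by
  obtain ⟨p, hip, j, hjp, hgap⟩ := hi
  obtain ⟨q, hkq⟩ := hC.2 k
  by_contra hk
  have hvk : ∀ l ∈ C q, v k - v l < Δ := fun l hl =>
    (hosc q k hkq l hl).lt_of_ne fun h => hk ⟨q, hkq, l, hl, h⟩
  have hrow (x : Fin n) : ∑ m, A x m * v m = v x := by
    simpa [mulVec, dotProduct] using congrFun hv x
  have hcluster (r : Fin K) :
      ∑ m ∈ C r, A i m * v m - ∑ m ∈ C r, A j m * v m ≤ (∑ m ∈ C r, A i m) * Δ :=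
    sum_mul_sub_sum_mul_le (fun m _ => hA.1 i m) (fun m _ => hA.1 j m)
      (hinfl p r j hjp i hip) (hosc r)
  have hk_cluster :
      ∑ m ∈ C q, A i m * v m - ∑ m ∈ C q, A j m * v m < (∑ m ∈ C q, A i m) * Δ :=
    sum_mul_sub_sum_mul_lt (fun m _ => hA.1 i m) (fun m _ => hA.1 j m)
      (hinfl p q j hjp i hip) (hosc q) hkq hik hvk
  have : Δ < Δ := calc
    Δ = ∑ r, (∑ m ∈ C r, A i m * v m - ∑ m ∈ C r, A j m * v m) := by
      rw [sum_sub_distrib, ← hC.sum_eq_sum_sum, ← hC.sum_eq_sum_sum, hrow, hrow, hgap]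
    _ < ∑ r, (∑ m ∈ C r, A i m) * Δ :=
      sum_lt_sum (fun r _ => hcluster r) ⟨q, mem_univ q, hk_cluster⟩
    _ = Δ := by rw [← sum_mul, ← hC.sum_eq_sum_sum, hA.2 i, one_mul]
  exact this.false

lemma AttainsClusterGap.of_reaches (hC : IsClustering C) (hA : IsStochastic A)
    (hinfl : InterClusterCommonInfluence C A) (hv : A *ᵥ v = v)
    (hosc : ∀ p, ∀ a ∈ C p, ∀ b ∈ C p, v a - v b ≤ Δ) {r i : Fin n}
    (hri : Reaches A r i) (hi : AttainsClusterGap C v Δ i) : AttainsClusterGap C v Δ r :=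
  Relation.ReflTransGen.head_induction_on hri hi fun hac _ hc =>
    hc.of_pos hC hA hinfl hv hosc hac

end ClusterGap

theorem stmt17_general {n K : ℕ} (C : Fin K → Finset (Fin n)) (hC : IsClustering C)
    (A : Matrix (Fin n) (Fin n) ℝ) (hA : IsStochastic A)
    (hinfl : InterClusterCommonInfluence C A)
    (hspan : HasClusterSpanningTrees C A)
    (v : Fin n → ℝ) (hv : A.mulVec v = v) :
    v ∈ SC C := by
  intro p a ha b hb
  obtain ⟨q, i, hi, j, hj, hosc⟩ := exists_clusterGap_max v ha
  suffices v i - v j ≤ 0 by linarith [hosc p a ha b hb, hosc p b hb a ha]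
  have hosc_neg : ∀ p, ∀ a ∈ C p, ∀ b ∈ C p, (-v) a - (-v) b ≤ v i - v j :=
    fun p a ha b hb => by rw [Pi.neg_apply, Pi.neg_apply, neg_sub_neg]; exact hosc p b hb a ha
  have hv_neg : A *ᵥ (-v) = -v := by rw [mulVec_neg, hv]
  obtain ⟨r, hr⟩ := hspan q
  obtain ⟨q₁, hr₁, y₁, hy₁, hgap⟩ :=
    AttainsClusterGap.of_reaches hC hA hinfl hv hosc (hr i hi) ⟨q, hi, j, hj, rfl⟩
  obtain ⟨q₂, hr₂, y₂, hy₂, hgap_neg⟩ :=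
    AttainsClusterGap.of_reaches hC hA hinfl hv_neg hosc_neg (hr j hj)
      ⟨q, hj, i, hi, neg_sub_neg _ _⟩
  obtain rfl := hC.eq_of_mem hr₁ hr₂
  simp only [Pi.neg_apply] at hgap_neg
  linarith [hosc q₁ y₂ hy₂ y₁ hy₁]

theorem stmt17 {n K : ℕ} (C : Fin K → Finset (Fin n)) (hC : IsClustering C)
    (A : Matrix (Fin n) (Fin n) ℝ) (hA : IsStochastic A)
    (hdiag : ∀ i, 0 < A i i)
    (hinfl : InterClusterCommonInfluence C A)
    (hspan : HasClusterSpanningTrees C A)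
    (v : Fin n → ℝ) (hv : A.mulVec v = v) :
    v ∈ SC C :=
  stmt17_general C hC A hA hinfl hspan v hv
end

section
/- Let C = {C_1,…,C_K} be a clustering of {1,…,n} and let A(t), t ≥ 0, be a sequence of n×n stochastic matrices satisfying: (B1) there exists e > 0 such that for all i, j, t, either A_{ij}(t) = 0 or A_{ij}(t) ≥ e; (B2) A_{ii}(t) ≥ e for all i and t; (B3*, static inter-cluster common influence) there exists a K×K stochastic matrix B = [b_{pq}] such that Σ_{j∈C_q} A_{ij}(t) = b_{pq} for all t ≥ 0, all i ∈ C_p and all p, q. Suppose there exists an integer L > 0 such that for every t ≥ 0 the matrix Σ_{s=t}^{t+L−1} A(s) has cluster-spanning-trees w.r.t. C. Then for every x ∈ ℝ^n there exists y ∈ S_C such that the left products applied to x − y vanish: A(t) A(t−1) ··· A(0) (x − y) → 0 as t → ∞. Equivalently, ℝ^n = S_C + {v ∈ ℝ^n : lim_{t→∞} A(t) A(t−1) ··· A(0) v = 0}. -/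
open Finset Filter Topology Matrix

/-!
Let `x t = A (t - 1) ⋯ A 0 x`.  The product over every block of `L * n ^ 2` steps has, for each
cluster, a column whose entries in the rows of that cluster are at least `e ^ (L * n ^ 2)`, and
because all products have inter-cluster common influence, a Hajnal-type argument shrinks the
spread of `x t` inside every cluster geometrically.  On vectors constant on clusters every `A t`
acts as `A 0`, so `x (t + 1)` differs from `A 0 (x t)` by at most that spread, which is summable.
The powers of `A 0`, a stochastic matrix with positive diagonal, converge, so the pseudo-orbit
`x t` of the nonexpansive map `A 0` converges to a fixed point `z`; `z` lies in `S_C` because the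
spreads vanish, hence `A t z = A 0 z = z` for all `t`, and `y = z` works.
-/

namespace IsStochastic

variable {n : ℕ} {M N : Matrix (Fin n) (Fin n) ℝ}

theorem mul (hM : IsStochastic M) (hN : IsStochastic N) : IsStochastic (M * N) := by
  refine ⟨fun i j => Finset.sum_nonneg (s := .univ) fun k _ => mul_nonneg (hM.1 i k) (hN.1 k j),
    fun i => ?_⟩
  simp only [Matrix.mul_apply]
  rw [Finset.sum_comm]
  simp [← Finset.mul_sum, hN.2, hM.2]

theorem one : IsStochastic (1 : Matrix (Fin n) (Fin n) ℝ) :=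
  ⟨fun i j => by by_cases h : i = j <;> simp [Matrix.one_apply, h],
    fun i => by simp [Matrix.one_apply]⟩

theorem pow (hM : IsStochastic M) (t : ℕ) : IsStochastic (M ^ t) := by
  induction t with
  | zero => exact one
  | succ t ih => rw [pow_succ]; exact ih.mul hM

theorem apply_le_one (hM : IsStochastic M) (i j : Fin n) : M i j ≤ 1 :=
  hM.2 i ▸ Finset.single_le_sum (fun k _ => hM.1 i k) (Finset.mem_univ j)

theorem norm_mulVec_le (hM : IsStochastic M) (v : Fin n → ℝ) : ‖M *ᵥ v‖ ≤ ‖v‖ := by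
  refine (pi_norm_le_iff_of_nonneg (norm_nonneg v)).2 fun i => ?_
  calc ‖(M *ᵥ v) i‖ = ‖∑ j, M i j * v j‖ := rfl
    _ ≤ ∑ j, M i j * ‖v‖ := by
        refine (norm_sum_le _ _).trans (Finset.sum_le_sum fun j _ => ?_)
        rw [norm_mul, Real.norm_of_nonneg (hM.1 i j)]
        exact mul_le_mul_of_nonneg_left (norm_le_pi_norm v j) (hM.1 i j)
    _ = ‖v‖ := by rw [← Finset.sum_mul, hM.2 i, one_mul]

theorem abs_mulVec_apply_le (hM : IsStochastic M) (v : Fin n → ℝ) (i k : Fin n) :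
    |(M *ᵥ v) i| ≤ M i k * |v k| + (1 - M i k) * ‖v‖ := by
  have hrow : ∑ j ∈ Finset.univ.erase k, M i j = 1 - M i k := by
    rw [← hM.2 i, ← Finset.add_sum_erase _ _ (Finset.mem_univ k), add_sub_cancel_left]
  change |∑ j, M i j * v j| ≤ _
  rw [← Finset.add_sum_erase _ _ (Finset.mem_univ k), ← hrow, Finset.sum_mul]
  refine (abs_add_le _ _).trans (add_le_add ?_ ?_)
  · rw [abs_mul, abs_of_nonneg (hM.1 i k)]
  · refine (Finset.abs_sum_le_sum_abs _ _).trans (Finset.sum_le_sum fun j _ => ?_)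
    rw [abs_mul, abs_of_nonneg (hM.1 i j)]
    exact mul_le_mul_of_nonneg_left (by simpa using norm_le_pi_norm v j) (hM.1 i j)

theorem lipschitzWith_mulVec (hM : IsStochastic M) : LipschitzWith 1 (M *ᵥ ·) :=
  LipschitzWith.of_dist_le_mul fun v w => by
    simpa [dist_eq_norm, ← Matrix.mulVec_sub] using hM.norm_mulVec_le (v - w)

end IsStochastic

theorem iterate_mulVec {n : ℕ} (M : Matrix (Fin n) (Fin n) ℝ) (h : ℕ) (v : Fin n → ℝ) :
    (M *ᵥ ·)^[h] v = (M ^ h) *ᵥ v := by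
  induction h with
  | zero => simp
  | succ h ih => rw [Function.iterate_succ_apply', ih, pow_succ', Matrix.mulVec_mulVec]

section Products

variable {n : ℕ} {A : ℕ → Matrix (Fin n) (Fin n) ℝ}

theorem prodFrom_add (A : ℕ → Matrix (Fin n) (Fin n) ℝ) (a m m' : ℕ) :
    prodFrom A a (m + m') = prodFrom A (a + m) m' * prodFrom A a m := by
  induction m' with
  | zero => simp [prodFrom]
  | succ m' ih => rw [← add_assoc, prodFrom, ih, prodFrom, add_assoc, Matrix.mul_assoc]

theorem IsStochastic.prodFrom (hA : ∀ t, IsStochastic (A t)) (a m : ℕ) :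
    IsStochastic (prodFrom A a m) := by
  induction m with
  | zero => exact .one
  | succ m ih => exact (hA _).mul ih

theorem prodFrom_mulVec_eq_self {z : Fin n → ℝ} (hz : ∀ t, A t *ᵥ z = z) (a m : ℕ) :
    prodFrom A a m *ᵥ z = z := by
  induction m with
  | zero => simp [prodFrom]
  | succ m ih => rw [prodFrom, ← Matrix.mulVec_mulVec, ih, hz]

end Products

section Positivity

variable {n : ℕ}

theorem le_mul_apply {M N : Matrix (Fin n) (Fin n) ℝ} (hM : ∀ i j, 0 ≤ M i j)
    (hN : ∀ i j, 0 ≤ N i j) (i k j : Fin n) : M i k * N k j ≤ (M * N) i j :=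
  Finset.single_le_sum (f := fun l => M i l * N l j) (fun l _ => mul_nonneg (hM i l) (hN l j))
    (Finset.mem_univ k)

theorem mul_apply_pos {M N : Matrix (Fin n) (Fin n) ℝ} (hM : ∀ i j, 0 ≤ M i j)
    (hN : ∀ i j, 0 ≤ N i j) {i k j : Fin n} (hik : 0 < M i k) (hkj : 0 < N k j) :
    0 < (M * N) i j :=
  (mul_pos hik hkj).trans_le (le_mul_apply hM hN i k j)

theorem exists_pos_of_mul_apply_pos {M N : Matrix (Fin n) (Fin n) ℝ} (hM : ∀ i j, 0 ≤ M i j)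
    (hN : ∀ i j, 0 ≤ N i j) {i j : Fin n} (h : 0 < (M * N) i j) :
    ∃ k, 0 < M i k ∧ 0 < N k j := by
  obtain ⟨k, -, hk⟩ := Finset.exists_lt_of_sum_lt (by simpa [Matrix.mul_apply] using h :
    ∑ _k, (0 : ℝ) < ∑ k, M i k * N k j)
  exact ⟨k, (hM i k).lt_of_ne fun h0 => by simp [← h0] at hk,
    (hN k j).lt_of_ne fun h0 => by simp [← h0] at hk⟩

variable {A : ℕ → Matrix (Fin n) (Fin n) ℝ}

theorem prodFrom_nonneg (hA : ∀ t i j, 0 ≤ A t i j) (a m : ℕ) (i j : Fin n) :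
    0 ≤ prodFrom A a m i j := by
  induction m generalizing i j with
  | zero => by_cases h : i = j <;> simp [prodFrom, Matrix.one_apply, h]
  | succ m ih =>
    exact Finset.sum_nonneg (s := .univ) fun k _ => mul_nonneg (hA (a + m) i k) (ih k j)

theorem prodFrom_apply_self_pos (hA : ∀ t i j, 0 ≤ A t i j) (hdiag : ∀ t i, 0 < A t i i)
    (a m : ℕ) (i : Fin n) : 0 < prodFrom A a m i i := by
  induction m with
  | zero => simp [prodFrom]
  | succ m ih => exact mul_apply_pos (hA _) (prodFrom_nonneg hA a m) (hdiag _ i) ih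

theorem prodFrom_apply_pos_of_sum_apply_pos (hA : ∀ t i j, 0 ≤ A t i j)
    (hdiag : ∀ t i, 0 < A t i i) {a L : ℕ} {i j : Fin n}
    (h : 0 < (∑ s ∈ Finset.range L, A (a + s)) i j) : 0 < prodFrom A a L i j := by
  obtain ⟨s, hs, hpos⟩ := Finset.exists_lt_of_sum_lt (by simpa [Matrix.sum_apply] using h :
    ∑ _s ∈ Finset.range L, (0 : ℝ) < ∑ s ∈ Finset.range L, A (a + s) i j)
  obtain ⟨l, rfl⟩ : ∃ l, L = s + 1 + l := ⟨L - (s + 1), by rw [Finset.mem_range] at hs; omega⟩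
  rw [prodFrom_add]
  exact mul_apply_pos (prodFrom_nonneg hA _ _) (prodFrom_nonneg hA _ _)
    (prodFrom_apply_self_pos hA hdiag _ _ i)
    (mul_apply_pos (hA _) (prodFrom_nonneg hA _ _) hpos (prodFrom_apply_self_pos hA hdiag _ _ j))

theorem pow_le_prodFrom_apply_of_pos (hA : ∀ t i j, 0 ≤ A t i j) {e : ℝ} (he : 0 ≤ e)
    (hB1 : ∀ t i j, A t i j = 0 ∨ e ≤ A t i j) (a m : ℕ) {i j : Fin n}
    (h : 0 < prodFrom A a m i j) : e ^ m ≤ prodFrom A a m i j := by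
  induction m generalizing i j with
  | zero =>
    by_cases hij : i = j
    · subst hij; simp [prodFrom]
    · simp [prodFrom, hij] at h
  | succ m ih =>
    obtain ⟨k, hik, hkj⟩ := exists_pos_of_mul_apply_pos (hA _) (prodFrom_nonneg hA a m) h
    calc e ^ (m + 1) = e * e ^ m := pow_succ' e m
      _ ≤ A (a + m) i k * prodFrom A a m k j :=
        mul_le_mul ((hB1 _ i k).resolve_left hik.ne') (ih hkj) (pow_nonneg he m) hik.le
      _ ≤ prodFrom A a (m + 1) i j := le_mul_apply (hA _) (prodFrom_nonneg hA a m) i k j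

end Positivity

section Spread

variable {ι : Type*}

def SpreadLE (F : Finset ι) (v : ι → ℝ) (D : ℝ) : Prop :=
  ∀ k ∈ F, ∀ l ∈ F, |v k - v l| ≤ D

theorem SpreadLE.nonneg {F : Finset ι} {v : ι → ℝ} {D : ℝ} (h : SpreadLE F v D) {k : ι}
    (hk : k ∈ F) : 0 ≤ D :=
  (abs_nonneg _).trans (h k hk k hk)

theorem spreadLE_two_mul_norm [Fintype ι] (F : Finset ι) (v : ι → ℝ) :
    SpreadLE F v (2 * ‖v‖) := fun k _ l _ => by
  have hk := norm_le_pi_norm v k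
  have hl := norm_le_pi_norm v l
  rw [Real.norm_eq_abs] at hk hl
  linarith [abs_sub (v k) (v l)]

theorem spreadLE_of_tendsto {F : Finset ι} {x : ℕ → ι → ℝ} {z : ι → ℝ} {g : ℕ → ℝ} {D : ℝ}
    (hx : Tendsto x atTop (𝓝 z)) (hg : Tendsto g atTop (𝓝 D)) (h : ∀ t, SpreadLE F (x t) (g t)) :
    SpreadLE F z D := fun k hk l hl =>
  le_of_tendsto_of_tendsto' (((continuous_apply k).tendsto z).comp hx |>.sub
    (((continuous_apply l).tendsto z).comp hx)).abs hg fun t => h t k hk l hl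

/-- Centering `v` at the midpoint of its range on `F` gives the factor `1 / 2`. -/
theorem abs_sum_mul_le_of_sum_eq_zero {F : Finset ι} {c v : ι → ℝ} {D : ℝ}
    (hc : ∑ k ∈ F, c k = 0) (hv : SpreadLE F v D) :
    |∑ k ∈ F, c k * v k| ≤ (∑ k ∈ F, |c k|) / 2 * D := by
  rcases F.eq_empty_or_nonempty with rfl | hF
  · simp
  obtain ⟨a, ha, hsup⟩ := F.exists_mem_eq_sup' hF v
  obtain ⟨b, hb, hinf⟩ := F.exists_mem_eq_inf' hF v
  have hμ : ∀ k ∈ F, |v k - (v a + v b) / 2| ≤ D / 2 := fun k hk => by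
    have h1 := hsup ▸ F.le_sup' v hk
    have h2 := hinf ▸ F.inf'_le v hk
    have hab := abs_le.1 (hv a ha b hb)
    rw [abs_le]
    constructor <;> linarith
  calc |∑ k ∈ F, c k * v k| = |∑ k ∈ F, c k * (v k - (v a + v b) / 2)| := by
        simp [mul_sub, Finset.sum_sub_distrib, ← Finset.sum_mul, hc]
    _ ≤ ∑ k ∈ F, |c k| * (D / 2) :=
        (Finset.abs_sum_le_sum_abs _ _).trans <| Finset.sum_le_sum fun k hk => by
          rw [abs_mul]; exact mul_le_mul_of_nonneg_left (hμ k hk) (abs_nonneg _)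
    _ = (∑ k ∈ F, |c k|) / 2 * D := by rw [← Finset.sum_mul]; ring

theorem sum_abs_sub_eq (F : Finset ι) (ρ σ : ι → ℝ) :
    ∑ k ∈ F, |ρ k - σ k| = ∑ k ∈ F, ρ k + ∑ k ∈ F, σ k - 2 * ∑ k ∈ F, min (ρ k) (σ k) := by
  rw [← Finset.sum_add_distrib, Finset.mul_sum, ← Finset.sum_sub_distrib]
  refine Finset.sum_congr rfl fun k _ => ?_
  rw [← max_sub_min_eq_abs']
  linarith [min_add_max (ρ k) (σ k)]

theorem abs_sum_mul_sub_sum_mul_le {F : Finset ι} {ρ σ v : ι → ℝ} {γ D : ℝ}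
    (hρ : ∑ k ∈ F, ρ k = 1) (hσ : ∑ k ∈ F, σ k = 1) (hγ : γ ≤ ∑ k ∈ F, min (ρ k) (σ k))
    (hv : SpreadLE F v D) (hD : 0 ≤ D) :
    |∑ k ∈ F, ρ k * v k - ∑ k ∈ F, σ k * v k| ≤ (1 - γ) * D := by
  rw [← Finset.sum_sub_distrib]
  simp_rw [← sub_mul]
  refine (abs_sum_mul_le_of_sum_eq_zero (by rw [Finset.sum_sub_distrib, hρ, hσ, sub_self])
    hv).trans (mul_le_mul_of_nonneg_right ?_ hD)
  rw [sum_abs_sub_eq, hρ, hσ]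
  linarith

end Spread

section Clusters

variable {n K : ℕ} {C : Fin K → Finset (Fin n)}

theorem IsClustering.sum_eq (hC : IsClustering C) (f : Fin n → ℝ) :
    ∑ k, f k = ∑ q, ∑ k ∈ C q, f k := by
  classical
  rw [← Finset.sum_biUnion fun p _ q _ hpq => hC.1 p q hpq]
  congr
  ext k
  simpa using hC.2 k

theorem abs_mulVec_sub_mulVec_le (hC : IsClustering C) {M N : Matrix (Fin n) (Fin n) ℝ}
    (hM : IsStochastic M) (hN : IsStochastic N) {i j : Fin n}
    (hMN : ∀ q, ∑ k ∈ C q, M i k = ∑ k ∈ C q, N j k) {γ : ℝ}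
    (hγ : γ ≤ ∑ k, min (M i k) (N j k)) {v : Fin n → ℝ} {D : ℝ} (hv : ∀ q, SpreadLE (C q) v D)
    (hD : 0 ≤ D) : |(M *ᵥ v) i - (N *ᵥ v) j| ≤ (1 - γ) * D := by
  change |∑ k, M i k * v k - ∑ k, N j k * v k| ≤ _
  rw [← Finset.sum_sub_distrib]
  simp_rw [← sub_mul]
  calc |∑ k, (M i k - N j k) * v k| = |∑ q, ∑ k ∈ C q, (M i k - N j k) * v k| := by
        rw [hC.sum_eq]
    _ ≤ ∑ q, (∑ k ∈ C q, |M i k - N j k|) / 2 * D :=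
        (Finset.abs_sum_le_sum_abs _ _).trans <| Finset.sum_le_sum fun q _ =>
          abs_sum_mul_le_of_sum_eq_zero (by rw [Finset.sum_sub_distrib, hMN, sub_self]) (hv q)
    _ = (∑ k, |M i k - N j k|) / 2 * D := by
        rw [hC.sum_eq fun k => |M i k - N j k|, Finset.sum_div, Finset.sum_mul]
    _ ≤ (1 - γ) * D := by
        refine mul_le_mul_of_nonneg_right ?_ hD
        rw [sum_abs_sub_eq, hM.2 i, hN.2 j]
        linarith

theorem norm_mulVec_sub_mulVec_le (hC : IsClustering C) {M N : Matrix (Fin n) (Fin n) ℝ}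
    (hM : IsStochastic M) (hN : IsStochastic N)
    (hMN : ∀ i q, ∑ k ∈ C q, M i k = ∑ k ∈ C q, N i k) {v : Fin n → ℝ} {D : ℝ}
    (hv : ∀ q, SpreadLE (C q) v D) (hD : 0 ≤ D) : ‖M *ᵥ v - N *ᵥ v‖ ≤ D := by
  refine (pi_norm_le_iff_of_nonneg hD).2 fun i => ?_
  simpa using abs_mulVec_sub_mulVec_le hC hM hN (hMN i)
    (Finset.sum_nonneg fun k _ => le_min (hM.1 i k) (hN.1 i k)) hv hD

theorem mem_SC_iff {x : Fin n → ℝ} : x ∈ SC C ↔ ∀ p, SpreadLE (C p) x 0 := by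
  simp [SC, SpreadLE, sub_eq_zero]

theorem mulVec_eq_of_mem_SC (hC : IsClustering C) {M N : Matrix (Fin n) (Fin n) ℝ}
    (hM : IsStochastic M) (hN : IsStochastic N)
    (hMN : ∀ i q, ∑ k ∈ C q, M i k = ∑ k ∈ C q, N i k) {z : Fin n → ℝ} (hz : z ∈ SC C) :
    M *ᵥ z = N *ᵥ z :=
  sub_eq_zero.1 <| norm_le_zero_iff.1 <|
    norm_mulVec_sub_mulVec_le hC hM hN hMN (mem_SC_iff.1 hz) le_rfl

/-- `γ` is a lower bound for the cluster ergodicity coefficient `muC C P`. -/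
theorem spreadLE_mulVec (hC : IsClustering C) {P : Matrix (Fin n) (Fin n) ℝ} (hP : IsStochastic P)
    (hCI : InterClusterCommonInfluence C P) {γ : ℝ}
    (hγ : ∀ p, ∀ i ∈ C p, ∀ j ∈ C p, γ ≤ ∑ k, min (P i k) (P j k)) {v : Fin n → ℝ} {D : ℝ}
    (hv : ∀ q, SpreadLE (C q) v D) (p : Fin K) : SpreadLE (C p) (P *ᵥ v) ((1 - γ) * D) :=
  fun i hi j hj => abs_mulVec_sub_mulVec_le hC hP hP (hCI p · i hi j hj) (hγ p i hi j hj) hv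
    ((hv p).nonneg hi)

theorem spreadLE_mulVec_of_isStochastic (hC : IsClustering C) {P : Matrix (Fin n) (Fin n) ℝ}
    (hP : IsStochastic P) (hCI : InterClusterCommonInfluence C P) {v : Fin n → ℝ} {D : ℝ}
    (hv : ∀ q, SpreadLE (C q) v D) (p : Fin K) : SpreadLE (C p) (P *ᵥ v) D := by
  simpa using spreadLE_mulVec hC hP hCI (γ := 0)
    (fun _ i _ j _ => Finset.sum_nonneg fun k _ => le_min (hP.1 i k) (hP.1 j k)) hv p

theorem mulVec_mem_SC (hC : IsClustering C) {M : Matrix (Fin n) (Fin n) ℝ} (hM : IsStochastic M)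
    (hCI : InterClusterCommonInfluence C M) {w : Fin n → ℝ} (hw : w ∈ SC C) : M *ᵥ w ∈ SC C :=
  mem_SC_iff.2 <| spreadLE_mulVec_of_isStochastic hC hM hCI (mem_SC_iff.1 hw)

namespace InterClusterCommonInfluence

theorem mul (hC : IsClustering C) {M N : Matrix (Fin n) (Fin n) ℝ} (hM : IsStochastic M)
    (hMC : InterClusterCommonInfluence C M) (hNC : InterClusterCommonInfluence C N) :
    InterClusterCommonInfluence C (M * N) := by
  intro p q i hi i' hi'
  have hcol : ∀ l, ∑ k ∈ C q, (M * N) l k = (M *ᵥ fun j => ∑ k ∈ C q, N j k) l := fun l => by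
    simp only [Matrix.mul_apply, Matrix.mulVec, dotProduct, Finset.mul_sum]
    exact Finset.sum_comm
  have hSC : (fun j => ∑ k ∈ C q, N j k) ∈ SC C := fun r j hj j' hj' => hNC r q j hj j' hj'
  rw [hcol, hcol]
  exact mulVec_mem_SC hC hM hMC hSC p i hi i' hi'

theorem one (hC : IsClustering C) :
    InterClusterCommonInfluence C (1 : Matrix (Fin n) (Fin n) ℝ) := by
  intro p q i hi i' hi'
  simp only [Matrix.one_apply, Finset.sum_ite_eq]
  by_cases hpq : p = q
  · subst hpq
    simp [hi, hi']
  · have hdisj := Finset.disjoint_left.1 (hC.1 p q hpq)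
    simp [hdisj hi, hdisj hi']

theorem prodFrom (hC : IsClustering C) {A : ℕ → Matrix (Fin n) (Fin n) ℝ}
    (hA : ∀ t, IsStochastic (A t)) (hCI : ∀ t, InterClusterCommonInfluence C (A t)) (a m : ℕ) :
    InterClusterCommonInfluence C (prodFrom A a m) := by
  induction m with
  | zero => exact one hC
  | succ m ih => exact mul hC (hA _) (hCI _) ih

end InterClusterCommonInfluence

end Clusters

section Metric

variable {α : Type*} [PseudoMetricSpace α]

/-- After time `t₀` the sequence shadows the orbit of `x t₀` up to the tail `∑ s ≥ t₀, g s`. -/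
theorem LipschitzWith.cauchySeq_of_summable_dist {f : α → α} (hf : LipschitzWith 1 f)
    (horbit : ∀ v, CauchySeq fun h => f^[h] v) {x : ℕ → α} {g : ℕ → ℝ} (hg : Summable g)
    (hx : ∀ t, dist (x (t + 1)) (f (x t)) ≤ g t) : CauchySeq x := by
  have hg0 (t : ℕ) : 0 ≤ g t := dist_nonneg.trans (hx t)
  have hshadow (t₀ h : ℕ) : dist (x (t₀ + h)) (f^[h] (x t₀)) ≤ ∑' s, g (s + t₀) := by
    refine le_trans ?_ (((summable_nat_add_iff t₀).2 hg).sum_le_tsum (Finset.range h)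
      fun s _ => hg0 _)
    induction h with
    | zero => simp
    | succ h ih =>
      rw [Finset.sum_range_succ, Function.iterate_succ_apply', ← add_assoc]
      calc dist (x (t₀ + h + 1)) (f (f^[h] (x t₀)))
          ≤ dist (x (t₀ + h + 1)) (f (x (t₀ + h))) + dist (f (x (t₀ + h))) (f (f^[h] (x t₀))) :=
            dist_triangle _ _ _
        _ ≤ g (t₀ + h) + dist (x (t₀ + h)) (f^[h] (x t₀)) :=
            add_le_add (hx _) (by simpa using hf.dist_le_mul _ _)
        _ ≤ _ := by rw [add_comm h t₀]; linarith
  rw [Metric.cauchySeq_iff']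
  intro ε hε
  obtain ⟨t₀, ht₀⟩ :=
    ((tendsto_sum_nat_add g).eventually (gt_mem_nhds (by positivity : 0 < ε / 3))).exists
  obtain ⟨H, hH⟩ := Metric.cauchySeq_iff'.1 (horbit (x t₀)) (ε / 3) (by positivity)
  refine ⟨t₀ + H, fun t ht => ?_⟩
  obtain ⟨h, rfl⟩ : ∃ h, t = t₀ + h := ⟨t - t₀, by omega⟩
  have h₁ := hshadow t₀ h
  have h₂ := hH h (by omega)
  have h₃ := hshadow t₀ H
  rw [dist_comm] at h₃
  linarith [dist_triangle4 (x (t₀ + h)) (f^[h] (x t₀)) (f^[H] (x t₀)) (x (t₀ + H))]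

theorem LipschitzWith.exists_tendsto_isFixedPt {β : Type*} [MetricSpace β] [CompleteSpace β]
    {f : β → β} (hf : LipschitzWith 1 f) (horbit : ∀ v, CauchySeq fun h => f^[h] v) {x : ℕ → β}
    {g : ℕ → ℝ} (hg : Summable g) (hx : ∀ t, dist (x (t + 1)) (f (x t)) ≤ g t) :
    ∃ z, Tendsto x atTop (𝓝 z) ∧ Function.IsFixedPt f z := by
  obtain ⟨z, hz⟩ := cauchySeq_tendsto_of_complete (hf.cauchySeq_of_summable_dist horbit hg hx)
  refine ⟨z, hz, tendsto_nhds_unique ?_ (hz.comp (tendsto_add_atTop_nat 1))⟩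
  refine tendsto_of_tendsto_of_dist ((hf.continuous.tendsto z).comp hz) ?_
  exact squeeze_zero (fun _ => dist_nonneg) (fun t => (dist_comm _ _).trans_le (hx t))
    hg.tendsto_atTop_zero

theorem cauchySeq_of_dist_add_le {x : ℕ → α} {N : ℕ} {q C : ℝ} (hq0 : 0 ≤ q) (hq1 : q < 1)
    (hC : ∀ t t', dist (x t) (x t') ≤ C)
    (h : ∀ ε > 0, ∀ᶠ p : ℕ × ℕ in atTop,
      dist (x (p.1 + N)) (x (p.2 + N)) ≤ q * dist (x p.1) (x p.2) + ε) :
    CauchySeq x := by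
  rw [Metric.cauchySeq_iff]
  intro ε hε
  obtain ⟨t₀, ht₀⟩ := eventually_atTop_prod_self'.1 (h (ε * (1 - q) / 2) (by nlinarith))
  have hiter (r : ℕ) : ∀ t ≥ t₀, ∀ t' ≥ t₀,
      dist (x (t + r * N)) (x (t' + r * N)) ≤ q ^ r * C + ε / 2 := by
    induction r with
    | zero => intro t _ t' _; simpa using (hC t t').trans (by linarith)
    | succ r ih =>
      intro t ht t' ht'
      rw [add_one_mul, ← add_assoc, ← add_assoc]
      calc dist (x (t + r * N + N)) (x (t' + r * N + N))
          ≤ q * dist (x (t + r * N)) (x (t' + r * N)) + ε * (1 - q) / 2 :=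
            ht₀ _ (le_add_right ht) _ (le_add_right ht')
        _ ≤ q * (q ^ r * C + ε / 2) + ε * (1 - q) / 2 := by gcongr; exact ih t ht t' ht'
        _ = q ^ (r + 1) * C + ε / 2 := by ring
  have hpow : Tendsto (fun r => q ^ r * C) atTop (𝓝 0) := by
    simpa using (tendsto_pow_atTop_nhds_zero_of_lt_one hq0 hq1).mul_const C
  obtain ⟨r, hr⟩ := (hpow.eventually (gt_mem_nhds (by positivity : 0 < ε / 2))).exists
  refine ⟨t₀ + r * N, fun u hu v hv => ?_⟩
  obtain ⟨t, rfl⟩ : ∃ t, u = t + r * N := ⟨u - r * N, by omega⟩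
  obtain ⟨t', rfl⟩ : ∃ t', v = t' + r * N := ⟨v - r * N, by omega⟩
  linarith [hiter r t (by omega) t' (by omega)]

end Metric

theorem summable_pow_div {r : ℝ} (h0 : 0 ≤ r) (h1 : r < 1) {m : ℕ} (hm : m ≠ 0) :
    Summable fun t : ℕ => r ^ (t / m) := by
  have : NeZero m := ⟨hm⟩
  rw [← (Nat.divModEquiv m).symm.summable_iff]
  convert (summable_geometric_of_lt_one h0 h1).mul_of_nonneg
    (hasSum_fintype fun _ : Fin m => (1 : ℝ)).summable (fun _ => pow_nonneg h0 _)
    (fun _ => zero_le_one) using 2 with p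
  simp [Nat.divModEquiv, Nat.add_comm _ (p.2 : ℕ),
    Nat.add_mul_div_right _ _ (Nat.pos_of_ne_zero hm), Nat.div_eq_of_lt p.2.is_lt]

theorem exists_pos_le_one_forall_le {ι : Type*} (s : Finset ι) {f : ι → ℝ}
    (hf : ∀ i ∈ s, 0 < f i) : ∃ κ, 0 < κ ∧ κ ≤ 1 ∧ ∀ i ∈ s, κ ≤ f i := by
  obtain ⟨κ, hκ, h⟩ := Filter.Eventually.exists_gt ((eventually_le_nhds one_pos).and
    ((s.eventually_all).2 fun i hi => eventually_le_nhds (hf i hi)))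
  exact ⟨κ, hκ, h.1, h.2⟩

theorem Relation.ReflTransGen.exists_rel_of_mem_of_not_mem {α : Type*} {r : α → α → Prop}
    {s : Set α} {a b : α} (h : Relation.ReflTransGen r a b) (ha : a ∈ s) (hb : b ∉ s) :
    ∃ u ∈ s, ∃ u' ∉ s, r u u' := by
  induction h with
  | refl => exact absurd ha hb
  | @tail c d _ hcd ih =>
    by_cases hc : c ∈ s
    · exact ⟨c, hc, d, hb, hcd⟩
    · exact ih hc

theorem Relation.exists_reflTransGen_recurrent {α : Type*} [Finite α] (r : α → α → Prop)
    (a : α) : ∃ b, Relation.ReflTransGen r b a ∧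
      ∀ c, Relation.ReflTransGen r c b → Relation.ReflTransGen r b c := by
  classical
  have := Fintype.ofFinite α
  let anc : α → Finset α := fun b => {c | Relation.ReflTransGen r c b}
  obtain ⟨b, hb, hmin⟩ := Finset.exists_min_image ({b | Relation.ReflTransGen r b a} : Finset α)
    (fun b => #(anc b)) ⟨a, by simpa using Relation.ReflTransGen.refl⟩
  rw [Finset.mem_filter] at hb
  refine ⟨b, hb.2, fun c hcb => ?_⟩
  have hsub : anc c ⊆ anc b := fun d hd => by
    simp only [anc, Finset.mem_filter, Finset.mem_univ, true_and] at hd ⊢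
    exact hd.trans hcb
  have heq := Finset.eq_of_subset_of_card_le hsub (hmin c (by simpa using hcb.trans hb.2))
  have hb' : b ∈ anc c := heq ▸ (by simpa [anc] using Relation.ReflTransGen.refl)
  simpa [anc] using hb'

/-- While `S ⊄ V w (root w)` the potential `∑ v, #(V w v)` increases, and it is at most
`card α ^ 2`. -/
theorem exists_subset_of_forall_subset_or_ssubset {α : Type*} [Fintype α] (V : ℕ → α → Finset α)
    (hmono : ∀ w v, V w v ⊆ V (w + 1) v) (hself : ∀ v, v ∈ V 0 v) (root : ℕ → α) (S : Finset α)
    (hgrow : ∀ w, S ⊆ V w (root w) ∨ V w (root w) ⊂ V (w + 1) (root w)) :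
    ∃ v, S ⊆ V (Fintype.card α ^ 2) v := by
  set N := Fintype.card α
  have hpot (w) : (∃ v, S ⊆ V w v) ∨ N + w ≤ ∑ v, #(V w v) := by
    induction w with
    | zero =>
      refine .inr ?_
      calc N + 0 = ∑ _v : α, 1 := by simp [N]
        _ ≤ ∑ v, #(V 0 v) := Finset.sum_le_sum fun v _ => Finset.card_pos.2 ⟨v, hself v⟩
    | succ w ih =>
      by_cases h : ∃ v, S ⊆ V w v
      · obtain ⟨v, hv⟩ := h
        exact .inl ⟨v, hv.trans (hmono w v)⟩
      · have hlt := Finset.sum_lt_sum (fun v _ => Finset.card_le_card (hmono w v))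
          ⟨root w, Finset.mem_univ _,
            Finset.card_lt_card ((hgrow w).resolve_left fun hS => h ⟨_, hS⟩)⟩
        have := ih.resolve_left h
        exact .inr (by omega)
  have hcard : ∑ v, #(V (N ^ 2) v) ≤ N ^ 2 :=
    calc ∑ v, #(V (N ^ 2) v) ≤ ∑ _v : α, N := Finset.sum_le_sum fun v _ => Finset.card_le_univ _
      _ = N ^ 2 := by simp [N, sq]
  have : 0 < N := Fintype.card_pos_iff.2 ⟨root 0⟩
  exact (hpot (N ^ 2)).resolve_right (by omega)

section Windows

variable {n : ℕ} {A : ℕ → Matrix (Fin n) (Fin n) ℝ}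

theorem exists_forall_prodFrom_apply_pos (hA : ∀ t i j, 0 ≤ A t i j)
    (hdiag : ∀ t i, 0 < A t i i) {L t : ℕ} {S : Finset (Fin n)}
    (hroot : ∀ w, ∃ v, ∀ i ∈ S, Reaches (∑ s ∈ Finset.range L, A (t + L * w + s)) v i) :
    ∃ v, ∀ i ∈ S, 0 < prodFrom A t (L * n ^ 2) i v := by
  classical
  choose root hroot using hroot
  let V : ℕ → Fin n → Finset (Fin n) := fun w v => {u | 0 < prodFrom A t (L * w) u v}
  have mem_V {w v u} : u ∈ V w v ↔ 0 < prodFrom A t (L * w) u v := by simp [V]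
  have hself (w v) : v ∈ V w v := mem_V.2 (prodFrom_apply_self_pos hA hdiag _ _ v)
  have hstep {w v u u'} (hu : u ∈ V w v) (h : 0 < prodFrom A (t + L * w) L u' u) :
      u' ∈ V (w + 1) v := by
    rw [mem_V, mul_add_one, prodFrom_add]
    exact mul_apply_pos (prodFrom_nonneg hA _ _) (prodFrom_nonneg hA _ _) h (mem_V.1 hu)
  have hmono (w v) : V w v ⊆ V (w + 1) v := fun u hu =>
    hstep hu (prodFrom_apply_self_pos hA hdiag _ _ u)
  have hgrow (w) : S ⊆ V w (root w) ∨ V w (root w) ⊂ V (w + 1) (root w) := by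
    refine or_iff_not_imp_left.2 fun hS => ?_
    obtain ⟨i, hiS, hiV⟩ := Finset.not_subset.1 hS
    obtain ⟨u, hu, u', hu', hedge⟩ :=
      (hroot w i hiS).exists_rel_of_mem_of_not_mem (s := {u | u ∈ V w (root w)}) (hself w _) hiV
    exact (Finset.ssubset_iff_of_subset (hmono w _)).2
      ⟨u', hstep hu (prodFrom_apply_pos_of_sum_apply_pos hA hdiag hedge), hu'⟩
  obtain ⟨v, hv⟩ := exists_subset_of_forall_subset_or_ssubset V hmono (hself 0) root S hgrow
  exact ⟨v, fun i hi => mem_V.1 (by simpa using hv hi)⟩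

end Windows

section ClusterConsensus

variable {n K : ℕ} {C : Fin K → Finset (Fin n)} {A : ℕ → Matrix (Fin n) (Fin n) ℝ}

theorem spreadLE_prodFrom_mulVec (hC : IsClustering C) (hA : ∀ t, IsStochastic (A t))
    (hdiag : ∀ t i, 0 < A t i i) {e : ℝ} (he : 0 ≤ e) (hB1 : ∀ t i j, A t i j = 0 ∨ e ≤ A t i j)
    (hCI : ∀ t, InterClusterCommonInfluence C (A t)) {L : ℕ}
    (hspan : ∀ t, HasClusterSpanningTrees C (∑ s ∈ Finset.range L, A (t + s)))
    {v : Fin n → ℝ} {D : ℝ} (hv : ∀ q, SpreadLE (C q) v D) (t : ℕ) (q : Fin K) :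
    SpreadLE (C q) (prodFrom A 0 t *ᵥ v) ((1 - e ^ (L * n ^ 2)) ^ (t / (L * n ^ 2)) * D) := by
  set m := L * n ^ 2
  have hnonneg : ∀ t i j, 0 ≤ A t i j := fun t => (hA t).1
  have hblock (r : ℕ) : ∀ q, SpreadLE (C q) (prodFrom A 0 (m * r) *ᵥ v) ((1 - e ^ m) ^ r * D) := by
    induction r with
    | zero => simpa [prodFrom] using hv
    | succ r ih =>
      intro q
      set P := prodFrom A (0 + m * r) m
      have hP := IsStochastic.prodFrom hA (0 + m * r) m
      rw [mul_add_one, prodFrom_add, ← Matrix.mulVec_mulVec, pow_succ', mul_assoc (1 - e ^ m)]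
      refine spreadLE_mulVec hC hP (.prodFrom hC hA hCI _ _) (fun p i hi j hj => ?_) ih q
      obtain ⟨w, hw⟩ := exists_forall_prodFrom_apply_pos hnonneg hdiag (S := C p) fun w => hspan _ p
      calc e ^ m ≤ min (P i w) (P j w) :=
            le_min (pow_le_prodFrom_apply_of_pos hnonneg he hB1 _ _ (hw i hi))
              (pow_le_prodFrom_apply_of_pos hnonneg he hB1 _ _ (hw j hj))
        _ ≤ ∑ k, min (P i k) (P j k) :=
            Finset.single_le_sum (f := fun k => min (P i k) (P j k))
              (fun k _ => le_min (hP.1 i k) (hP.1 j k)) (Finset.mem_univ w)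
  have ht : prodFrom A 0 t = prodFrom A (0 + m * (t / m)) (t % m) * prodFrom A 0 (m * (t / m)) := by
    rw [← prodFrom_add, Nat.div_add_mod]
  rw [ht, ← Matrix.mulVec_mulVec]
  exact spreadLE_mulVec_of_isStochastic hC (IsStochastic.prodFrom hA _ _)
    (.prodFrom hC hA hCI _ _) (hblock _) q

theorem exists_summable_spreadLE_prodFrom_mulVec [Nonempty (Fin n)] (hC : IsClustering C)
    (hA : ∀ t, IsStochastic (A t)) {e : ℝ} (he : 0 < e) (hB1 : ∀ t i j, A t i j = 0 ∨ e ≤ A t i j)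
    (hB2 : ∀ t i, e ≤ A t i i) (hCI : ∀ t, InterClusterCommonInfluence C (A t)) {L : ℕ}
    (hL : 0 < L) (hspan : ∀ t, HasClusterSpanningTrees C (∑ s ∈ Finset.range L, A (t + s)))
    (x : Fin n → ℝ) : ∃ g : ℕ → ℝ, Summable g ∧ (∀ t, 0 ≤ g t) ∧
      ∀ t q, SpreadLE (C q) (prodFrom A 0 t *ᵥ x) (g t) := by
  obtain ⟨i₀⟩ := ‹Nonempty (Fin n)›
  have hγ : e ^ (L * n ^ 2) ≤ 1 :=
    pow_le_one₀ he.le ((hB2 0 i₀).trans ((hA 0).apply_le_one i₀ i₀))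
  refine ⟨fun t => (1 - e ^ (L * n ^ 2)) ^ (t / (L * n ^ 2)) * (2 * ‖x‖), ?_, fun t => ?_,
    spreadLE_prodFrom_mulVec hC hA (fun t i => he.trans_le (hB2 t i)) he.le hB1 hCI hspan
      fun q => spreadLE_two_mul_norm _ x⟩
  · exact (summable_pow_div (by linarith) (by linarith [pow_pos he (L * n ^ 2)])
      (Nat.mul_ne_zero hL.ne' (pow_ne_zero 2 i₀.pos.ne'))).mul_right _
  · exact mul_nonneg (pow_nonneg (by linarith) _) (by positivity)

end ClusterConsensus

section Powers

variable {n : ℕ} {B : Matrix (Fin n) (Fin n) ℝ}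

-- For the chain with transition matrix `B`, `Reaches B j i` says that `j` is accessible from `i`.
def IsRecurrent (B : Matrix (Fin n) (Fin n) ℝ) (i : Fin n) : Prop :=
  ∀ j, Reaches B j i → Reaches B i j

open Classical in
noncomputable def ancestors (B : Matrix (Fin n) (Fin n) ℝ) (i : Fin n) : Finset (Fin n) :=
  {j | Reaches B j i}

theorem mem_ancestors {i j : Fin n} : j ∈ ancestors B i ↔ Reaches B j i := by
  simp [ancestors]

theorem exists_isRecurrent_reaches (B : Matrix (Fin n) (Fin n) ℝ) (i : Fin n) :
    ∃ r, IsRecurrent B r ∧ Reaches B r i :=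
  let ⟨r, hr, hrec⟩ := Relation.exists_reflTransGen_recurrent _ i
  ⟨r, hrec, hr⟩

theorem reaches_of_pow_apply_pos (hB : IsStochastic B) {ℓ : ℕ} {i j : Fin n}
    (h : 0 < (B ^ ℓ) i j) : Reaches B j i := by
  induction ℓ generalizing i with
  | zero =>
    by_cases hij : i = j
    · exact hij ▸ .refl
    · simp [hij] at h
  | succ ℓ ih =>
    rw [pow_succ'] at h
    obtain ⟨k, hik, hkj⟩ := exists_pos_of_mul_apply_pos hB.1 (hB.pow ℓ).1 h
    exact (ih hkj).tail hik

theorem eventually_pow_apply_pos (hB : IsStochastic B) (hdiag : ∀ i, 0 < B i i) {i j : Fin n}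
    (h : Reaches B j i) : ∀ᶠ t in atTop, 0 < (B ^ t) i j := by
  induction h with
  | refl =>
    refine .of_forall fun t => ?_
    induction t with
    | zero => simp
    | succ t ih => rw [pow_succ']; exact mul_apply_pos hB.1 (hB.pow t).1 (hdiag j) ih
  | @tail k i _ hik ih =>
    obtain ⟨T, hT⟩ := eventually_atTop.1 ih
    refine eventually_atTop.2 ⟨T + 1, fun t ht => ?_⟩
    obtain ⟨t, rfl⟩ : ∃ s, t = s + 1 := ⟨t - 1, by omega⟩
    rw [pow_succ']
    exact mul_apply_pos hB.1 (hB.pow t).1 hik (hT t (by omega))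

theorem pow_apply_eq_zero_of_not_mem_ancestors (hB : IsStochastic B) {i j k : Fin n}
    (hj : j ∈ ancestors B i) (hk : k ∉ ancestors B i) (t : ℕ) : (B ^ t) j k = 0 :=
  (not_lt.1 fun hpos => hk <| mem_ancestors.2 <| (reaches_of_pow_apply_pos hB hpos).trans
    (mem_ancestors.1 hj)).antisymm ((hB.pow t).1 j k)

theorem pow_mulVec_apply_eq_sum_ancestors (hB : IsStochastic B) {i j : Fin n}
    (hj : j ∈ ancestors B i) (t : ℕ) (v : Fin n → ℝ) :
    (B ^ t *ᵥ v) j = ∑ k ∈ ancestors B i, (B ^ t) j k * v k :=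
  (Finset.sum_subset (f := fun k => (B ^ t) j k * v k) (Finset.subset_univ _) fun k _ hk => by
    simp [pow_apply_eq_zero_of_not_mem_ancestors hB hj hk]).symm

theorem sum_ancestors_pow_apply (hB : IsStochastic B) {i j : Fin n} (hj : j ∈ ancestors B i)
    (t : ℕ) : ∑ k ∈ ancestors B i, (B ^ t) j k = 1 :=
  (Finset.sum_subset (Finset.subset_univ _) fun _ _ hk =>
    pow_apply_eq_zero_of_not_mem_ancestors hB hj hk t).trans ((hB.pow t).2 j)

/-- Some power `B ^ N` puts mass `δ > 0` on the column `i` in every row of `ancestors B i`. -/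
theorem IsRecurrent.exists_spreadLE_pow_mulVec (hB : IsStochastic B) (hdiag : ∀ i, 0 < B i i)
    {i : Fin n} (hi : IsRecurrent B i) (c : Fin n → ℝ) :
    ∃ N δ, 0 < δ ∧ δ ≤ 1 ∧
      ∀ r, SpreadLE (ancestors B i) (B ^ (N * r) *ᵥ c) ((1 - δ) ^ r * (2 * ‖c‖)) := by
  obtain ⟨N, hN⟩ := (((ancestors B i).eventually_all).2 fun j hj =>
    eventually_pow_apply_pos hB hdiag (hi j (mem_ancestors.1 hj))).exists
  obtain ⟨δ, hδ, hδ1, hδle⟩ := exists_pos_le_one_forall_le _ hN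
  refine ⟨N, δ, hδ, hδ1, fun r => ?_⟩
  induction r with
  | zero => simpa using spreadLE_two_mul_norm _ c
  | succ r ih =>
    intro j hj j' hj'
    rw [mul_add_one, add_comm, pow_add, ← Matrix.mulVec_mulVec,
      pow_mulVec_apply_eq_sum_ancestors hB hj, pow_mulVec_apply_eq_sum_ancestors hB hj',
      pow_succ', mul_assoc (1 - δ)]
    refine abs_sum_mul_sub_sum_mul_le (sum_ancestors_pow_apply hB hj N)
      (sum_ancestors_pow_apply hB hj' N) ?_ ih (by have := norm_nonneg c; positivity)
    exact (le_min (hδle j hj) (hδle j' hj')).trans <|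
      Finset.single_le_sum (f := fun k => min ((B ^ N) j k) ((B ^ N) j' k))
        (fun k _ => le_min ((hB.pow N).1 j k) ((hB.pow N).1 j' k)) (mem_ancestors.2 .refl)

/-- Once the spread of `B ^ t c` on `ancestors B i` is small, `(B ^ t c) i` stays put, since
later values at `i` are averages of values on `ancestors B i`. -/
theorem IsRecurrent.cauchySeq_pow_mulVec_apply (hB : IsStochastic B) (hdiag : ∀ i, 0 < B i i)
    {i : Fin n} (hi : IsRecurrent B i) (c : Fin n → ℝ) : CauchySeq fun t => (B ^ t *ᵥ c) i := by
  obtain ⟨N, δ, hδ, hδ1, hspread⟩ := hi.exists_spreadLE_pow_mulVec hB hdiag c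
  have hiF : i ∈ ancestors B i := mem_ancestors.2 .refl
  have hpow : Tendsto (fun r => (1 - δ) ^ r * (2 * ‖c‖)) atTop (𝓝 0) := by
    simpa using (tendsto_pow_atTop_nhds_zero_of_lt_one (by linarith) (by linarith)).mul_const
      (2 * ‖c‖)
  rw [Metric.cauchySeq_iff']
  intro ε hε
  obtain ⟨r, hr⟩ := (hpow.eventually (gt_mem_nhds hε)).exists
  refine ⟨N * r, fun t ht => ?_⟩
  obtain ⟨s, rfl⟩ : ∃ s, t = s + N * r := ⟨t - N * r, by omega⟩
  have hmove := abs_sum_mul_sub_sum_mul_le (sum_ancestors_pow_apply hB hiF s)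
    (σ := Pi.single i 1) (by simp [hiF]) (γ := 0)
    (Finset.sum_nonneg fun k _ => le_min ((hB.pow s).1 i k)
      (by rw [Pi.single_apply]; split_ifs <;> norm_num))
    (hspread r) ((hspread r).nonneg hiF)
  rw [Real.dist_eq, pow_add, ← Matrix.mulVec_mulVec, pow_mulVec_apply_eq_sum_ancestors hB hiF]
  simp only [Pi.single_apply, ite_mul, one_mul, zero_mul, Finset.sum_ite_eq', hiF, if_true,
    sub_zero] at hmove
  linarith

/-- Every state reaches a recurrent one, so some `B ^ N` puts mass `κ > 0` on recurrent columns
in every row; as the recurrent coordinates converge, the sequence contracts by `1 - κ` every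
`N` steps up to an error that tends to zero. -/
theorem IsStochastic.cauchySeq_pow_mulVec (hB : IsStochastic B) (hdiag : ∀ i, 0 < B i i)
    (c : Fin n → ℝ) : CauchySeq fun t => B ^ t *ᵥ c := by
  choose r hrec hreach using exists_isRecurrent_reaches B
  obtain ⟨N, hN⟩ := (eventually_all.2 fun i => eventually_pow_apply_pos hB hdiag (hreach i)).exists
  obtain ⟨κ, hκ, hκ1, hκle⟩ := exists_pos_le_one_forall_le Finset.univ fun i _ => hN i
  have hbound (t t' : ℕ) : dist (B ^ t *ᵥ c) (B ^ t' *ᵥ c) ≤ 2 * ‖c‖ := by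
    rw [dist_eq_norm]
    linarith [norm_sub_le (B ^ t *ᵥ c) (B ^ t' *ᵥ c), (hB.pow t).norm_mulVec_le c,
      (hB.pow t').norm_mulVec_le c]
  refine cauchySeq_of_dist_add_le (N := N) (by linarith) (by linarith : 1 - κ < 1) hbound
    fun ε hε => ?_
  have hrecur : ∀ᶠ p : ℕ × ℕ in atTop,
      ∀ i, dist ((B ^ p.1 *ᵥ c) (r i)) ((B ^ p.2 *ᵥ c) (r i)) ≤ ε :=
    eventually_all.2 fun i => (cauchySeq_iff_tendsto_dist_atTop_0.1
      ((hrec i).cauchySeq_pow_mulVec_apply hB hdiag c)).eventually (eventually_le_nhds hε)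
  filter_upwards [hrecur] with ⟨t, t'⟩ hp
  dsimp only at hp ⊢
  rw [dist_eq_norm, dist_eq_norm]
  set Δ := B ^ t *ᵥ c - B ^ t' *ᵥ c
  have hΔ : B ^ (t + N) *ᵥ c - B ^ (t' + N) *ᵥ c = B ^ N *ᵥ Δ := by
    simp only [Δ, Matrix.mulVec_sub, Matrix.mulVec_mulVec, ← pow_add, add_comm N]
  rw [hΔ]
  refine (pi_norm_le_iff_of_nonneg (by positivity)).2 fun i => ?_
  have hP := (hB.pow N).abs_mulVec_apply_le Δ i (r i)
  have hΔr : |Δ (r i)| ≤ ε := by simpa [Δ, Real.dist_eq] using hp i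
  have h1 := (hB.pow N).apply_le_one i (r i)
  have h2 := hκle i (Finset.mem_univ i)
  rw [Real.norm_eq_abs]
  nlinarith [norm_nonneg Δ, abs_nonneg (Δ (r i))]

end Powers

theorem stmt19_general {n K : ℕ} (C : Fin K → Finset (Fin n)) (hC : IsClustering C)
    (A : ℕ → Matrix (Fin n) (Fin n) ℝ)
    (hstoch : ∀ t, IsStochastic (A t))
    (e : ℝ) (he : 0 < e)
    (hB1 : ∀ t i j, A t i j = 0 ∨ e ≤ A t i j)
    (hB2 : ∀ t i, e ≤ A t i i)
    (B : Matrix (Fin K) (Fin K) ℝ)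
    (hB3 : ∀ t p q, ∀ i ∈ C p, ∑ j ∈ C q, A t i j = B p q)
    (L : ℕ) (hL : 0 < L)
    (hspan : ∀ t, HasClusterSpanningTrees C (∑ s ∈ Finset.range L, A (t + s))) :
    ∀ x : Fin n → ℝ, ∃ y ∈ SC C,
      Tendsto (fun t : ℕ => (prodFrom A 0 (t + 1)).mulVec (x - y)) atTop (𝓝 0) := by
  intro x
  rcases isEmpty_or_nonempty (Fin n) with hn | hn
  · exact ⟨x, fun _ i => isEmptyElim i, by simp [Subsingleton.elim _ (0 : Fin n → ℝ)]⟩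
  have hsums (s t) (i : Fin n) (q : Fin K) : ∑ k ∈ C q, A s i k = ∑ k ∈ C q, A t i k := by
    obtain ⟨p, hp⟩ := hC.2 i
    rw [hB3 s p q i hp, hB3 t p q i hp]
  obtain ⟨g, hg, hg0, hspread⟩ := exists_summable_spreadLE_prodFrom_mulVec hC hstoch he hB1 hB2
    (fun t p q i hi i' hi' => by rw [hB3 t p q i hi, hB3 t p q i' hi']) hL hspan x
  have hstep (t) : dist (prodFrom A 0 (t + 1) *ᵥ x) (A 0 *ᵥ (prodFrom A 0 t *ᵥ x)) ≤ g t := by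
    rw [dist_eq_norm, prodFrom, zero_add, ← Matrix.mulVec_mulVec]
    exact norm_mulVec_sub_mulVec_le hC (hstoch t) (hstoch 0) (hsums t 0) (hspread t) (hg0 t)
  obtain ⟨z, hz, hfix⟩ := (hstoch 0).lipschitzWith_mulVec.exists_tendsto_isFixedPt
    (fun v => by simpa only [iterate_mulVec] using
      (hstoch 0).cauchySeq_pow_mulVec (fun i => he.trans_le (hB2 0 i)) v)
    (x := fun t => prodFrom A 0 t *ᵥ x) hg hstep
  have hzSC : z ∈ SC C := mem_SC_iff.2 fun q =>
    spreadLE_of_tendsto hz hg.tendsto_atTop_zero (hspread · q)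
  have hz_fixed (s) : A s *ᵥ z = z :=
    (mulVec_eq_of_mem_SC hC (hstoch s) (hstoch 0) (hsums s 0) hzSC).trans hfix
  refine ⟨z, hzSC, ?_⟩
  have hconv : Tendsto (fun t => prodFrom A 0 (t + 1) *ᵥ x - z) atTop (𝓝 (z - z)) :=
    (hz.comp (tendsto_add_atTop_nat 1)).sub_const z
  simpa only [Matrix.mulVec_sub, prodFrom_mulVec_eq_self hz_fixed, sub_self] using hconv

theorem stmt19 {n K : ℕ} (C : Fin K → Finset (Fin n)) (hC : IsClustering C)
    (A : ℕ → Matrix (Fin n) (Fin n) ℝ)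
    (hstoch : ∀ t, IsStochastic (A t))
    (e : ℝ) (he : 0 < e)
    (hB1 : ∀ t i j, A t i j = 0 ∨ e ≤ A t i j)
    (hB2 : ∀ t i, e ≤ A t i i)
    (B : Matrix (Fin K) (Fin K) ℝ) (hBstoch : IsStochastic B)
    (hB3 : ∀ t p q, ∀ i ∈ C p, ∑ j ∈ C q, A t i j = B p q)
    (L : ℕ) (hL : 0 < L)
    (hspan : ∀ t, HasClusterSpanningTrees C (∑ s ∈ Finset.range L, A (t + s))) :
    ∀ x : Fin n → ℝ, ∃ y ∈ SC C,
      Tendsto (fun t : ℕ => (prodFrom A 0 (t + 1)).mulVec (x - y)) atTop (𝓝 0) :=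
  stmt19_general C hC A hstoch e he hB1 hB2 B hB3 L hL hspan
end
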